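/- arXiv:2209.14579 — 5 statements merged into one kernel-verified Lean document; each statement's English description precedes it below -/
import Mathlib

section
/- Let A ∈ ℝ^{n×n} and let 1 ≤ s < d(A). Define Φ_s(A) = max over unit vectors v ∈ ℝⁿ of min over monic polynomials p of degree s of ‖p(A)v‖. Then Φ_s(A) = Φ_s(Aᵀ). -/
/-! The inner minimum is the distance from `A ^ s v` to the Krylov space
`K = span {v, A v, …, A ^ (s - 1) v}`, which by duality is the largest value of `⟪w, A ^ s v⟫`
over unit vectors `w ⊥ K`. Hence `Φ_s(A)` is the supremum of `⟪w, A ^ s v⟫` over `‖v‖, ‖w‖ ≤ 1`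
with `⟪w, A ^ i v⟫ = 0` for `i < s`; since `⟪w, A ^ i v⟫ = ⟪v, (Aᵀ) ^ i w⟫`, exchanging `v` and `w`
shows that this set of values is the same for `A` and `Aᵀ`. -/

open Polynomial Filter Topology Matrix

noncomputable section

def mulv {ι : Type*} [Fintype ι] (A : Matrix ι ι ℝ) (v : EuclideanSpace ℝ ι) :
    EuclideanSpace ℝ ι :=
  (WithLp.equiv 2 (ι → ℝ)).symm (A.mulVec ((WithLp.equiv 2 (ι → ℝ)) v))

def Krylov {ι : Type*} [Fintype ι] [DecidableEq ι] (A : Matrix ι ι ℝ) (s : ℕ) (v : EuclideanSpace ℝ ι) :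
    Submodule ℝ (EuclideanSpace ℝ ι) :=
  Submodule.span ℝ (Set.range fun i : Fin s => mulv (A ^ (i : ℕ)) v)

def IsArnoldiProj {ι : Type*} [Fintype ι] [DecidableEq ι] (A : Matrix ι ι ℝ) (s : ℕ)
    (v w : EuclideanSpace ℝ ι) : Prop :=
  w - mulv (A ^ s) v ∈ Krylov A s v ∧ ∀ u ∈ Krylov A s v, inner ℝ w u = (0 : ℝ)

def vgrade {ι : Type*} [Fintype ι] [DecidableEq ι] (A : Matrix ι ι ℝ)
    (v : EuclideanSpace ℝ ι) : ℕ :=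
  sInf {d | ∃ p : ℝ[X], p ≠ 0 ∧ p.natDegree = d ∧ mulv (aeval A p) v = 0}

def dmin {ι : Type*} [Fintype ι] [DecidableEq ι] (A : Matrix ι ι ℝ) : ℕ :=
  (minpoly ℝ A).natDegree

def Phi {ι : Type*} [Fintype ι] [DecidableEq ι] (A : Matrix ι ι ℝ) (s : ℕ) : ℝ :=
  sSup {r | ∃ v : EuclideanSpace ℝ ι, ‖v‖ = 1 ∧
    r = sInf {t | ∃ q : ℝ[X], q.Monic ∧ q.natDegree = s ∧ t = ‖mulv (aeval A q) v‖}}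

def opNorm {ι : Type*} [Fintype ι] [DecidableEq ι] (A : Matrix ι ι ℝ) : ℝ :=
  ‖Matrix.toEuclideanCLM (𝕜 := ℝ) A‖


open Submodule InnerProductSpace

theorem monic_and_natDegree_eq_iff {R : Type*} [Ring R] [Nontrivial R] {q : R[X]} {s : ℕ} :
    q.Monic ∧ q.natDegree = s ↔ ∃ r ∈ degreeLT R s, X ^ s - r = q := by
  constructor
  · rintro ⟨hq, rfl⟩
    refine ⟨X ^ q.natDegree - q, mem_degreeLT.2 ?_, sub_sub_cancel _ _⟩
    have := degree_sub_lt_left (p := X ^ q.natDegree) (q := q)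
      (by rw [degree_X_pow, degree_eq_natDegree hq.ne_zero]) (monic_X_pow _).ne_zero
      (by rw [hq.leadingCoeff, leadingCoeff_X_pow])
    rwa [degree_X_pow] at this
  · rintro ⟨r, hr, rfl⟩
    rw [mem_degreeLT] at hr
    refine ⟨monic_X_pow_sub hr, natDegree_eq_of_degree_eq_some ?_⟩
    rw [degree_sub_eq_left_of_degree_lt (by rwa [degree_X_pow]), degree_X_pow]

section OrthogonalProjection

variable {F : Type*} [NormedAddCommGroup F] [InnerProductSpace ℝ F]
  (K : Submodule ℝ F) [K.HasOrthogonalProjection] (x : F)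

theorem inner_sub_starProjection_of_mem_orthogonal {w : F} (hw : w ∈ Kᗮ) :
    ⟪w, x - K.starProjection x⟫_ℝ = ⟪w, x⟫_ℝ := by
  rw [inner_sub_right, (K.mem_orthogonal' w).1 hw _ (K.starProjection_apply_mem x), sub_zero]

theorem inner_le_norm_sub_starProjection {w : F} (hw : w ∈ Kᗮ) (hw1 : ‖w‖ ≤ 1) :
    ⟪w, x⟫_ℝ ≤ ‖x - K.starProjection x‖ :=
  calc ⟪w, x⟫_ℝ = ⟪w, x - K.starProjection x⟫_ℝ :=
        (inner_sub_starProjection_of_mem_orthogonal K x hw).symm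
    _ ≤ ‖w‖ * ‖x - K.starProjection x‖ := real_inner_le_norm _ _
    _ ≤ ‖x - K.starProjection x‖ := mul_le_of_le_one_left (norm_nonneg _) hw1

theorem exists_inner_eq_norm_sub_starProjection :
    ∃ w ∈ Kᗮ, ‖w‖ ≤ 1 ∧ ⟪w, x⟫_ℝ = ‖x - K.starProjection x‖ := by
  set y := x - K.starProjection x with hy_def
  have hy : y ∈ Kᗮ := K.sub_starProjection_mem_orthogonal x
  rcases eq_or_ne y 0 with h0 | h0
  · exact ⟨0, Kᗮ.zero_mem, by simp, by simp [h0]⟩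
  refine ⟨‖y‖⁻¹ • y, Kᗮ.smul_mem _ hy, by simp [norm_smul, h0], ?_⟩
  have hyx : ⟪y, x⟫_ℝ = ‖y‖ ^ 2 := by
    rw [← inner_sub_starProjection_of_mem_orthogonal K x hy, ← hy_def,
      real_inner_self_eq_norm_sq]
  rw [real_inner_smul_left, hyx]
  field_simp

theorem mem_orthogonal_span_range_iff {ι : Type*} (f : ι → F) (w : F) :
    w ∈ (span ℝ (Set.range f))ᗮ ↔ ∀ i, ⟪w, f i⟫_ℝ = 0 := by
  rw [← span_singleton_le_iff_mem, ← isOrtho_iff_le, isOrtho_span]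
  simp

end OrthogonalProjection

section Krylov

variable {ι : Type*} [Fintype ι] [DecidableEq ι] (A : Matrix ι ι ℝ) (s : ℕ)
  (v : EuclideanSpace ℝ ι)

theorem mulv_eq_toEuclideanLin (M : Matrix ι ι ℝ) : mulv M v = M.toEuclideanLin v := rfl

theorem inner_mulv_transpose (M : Matrix ι ι ℝ) (w : EuclideanSpace ℝ ι) :
    ⟪w, mulv Mᵀ v⟫_ℝ = ⟪v, mulv M w⟫_ℝ := by
  rw [mulv_eq_toEuclideanLin, ← conjTranspose_eq_transpose_of_trivial,
    toEuclideanLin_conjTranspose_eq_adjoint, LinearMap.adjoint_inner_right, real_inner_comm,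
    mulv_eq_toEuclideanLin]

def krylovMap : ℝ[X] →ₗ[ℝ] EuclideanSpace ℝ ι :=
  LinearMap.applyₗ v ∘ₗ Matrix.toEuclideanLin.toLinearMap ∘ₗ (aeval A).toLinearMap

theorem krylovMap_apply (p : ℝ[X]) : krylovMap A v p = mulv (aeval A p) v := rfl

theorem krylov_eq_map_degreeLT : Krylov A s v = (degreeLT ℝ s).map (krylovMap A v) := by
  classical
  rw [degreeLT_eq_span_X_pow, map_span, Krylov]
  congr 1
  ext u
  simp [krylovMap_apply, aeval_X_pow, Fin.exists_iff]

theorem monic_norm_set_eq :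
    {t | ∃ q : ℝ[X], q.Monic ∧ q.natDegree = s ∧ t = ‖mulv (aeval A q) v‖} =
      (fun u => ‖mulv (A ^ s) v - u‖) '' Krylov A s v := by
  have hsub (r : ℝ[X]) : mulv (aeval A (X ^ s - r)) v = mulv (A ^ s) v - krylovMap A v r := by
    simp [krylovMap_apply, mulv_eq_toEuclideanLin]
  rw [krylov_eq_map_degreeLT, map_coe, Set.image_image]
  ext t
  constructor
  · rintro ⟨q, hmonic, hdeg, rfl⟩
    obtain ⟨r, hr, rfl⟩ := monic_and_natDegree_eq_iff.1 ⟨hmonic, hdeg⟩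
    exact ⟨r, hr, by rw [hsub]⟩
  · rintro ⟨r, hr, rfl⟩
    obtain ⟨hmonic, hdeg⟩ := monic_and_natDegree_eq_iff.2 ⟨r, hr, rfl⟩
    exact ⟨_, hmonic, hdeg, by rw [hsub]⟩

theorem sInf_monic_norm_eq :
    sInf {t | ∃ q : ℝ[X], q.Monic ∧ q.natDegree = s ∧ t = ‖mulv (aeval A q) v‖} =
      ‖mulv (A ^ s) v - (Krylov A s v).starProjection (mulv (A ^ s) v)‖ := by
  rw [monic_norm_set_eq]
  refine IsLeast.csInf_eq ⟨⟨_, starProjection_apply_mem _ _, rfl⟩, ?_⟩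
  rintro _ ⟨u, hu, rfl⟩
  rw [starProjection_minimal]
  exact ciInf_le ⟨0, by rintro _ ⟨z, rfl⟩; exact norm_nonneg _⟩ (⟨u, hu⟩ : Krylov A s v)

theorem mem_orthogonal_krylov_iff (w : EuclideanSpace ℝ ι) :
    w ∈ (Krylov A s v)ᗮ ↔ ∀ i < s, ⟪w, mulv (A ^ i) v⟫_ℝ = 0 := by
  rw [Krylov, mem_orthogonal_span_range_iff, Fin.forall_iff]

def krylovPairings : Set ℝ :=
  {r | ∃ v w : EuclideanSpace ℝ ι, ‖v‖ ≤ 1 ∧ ‖w‖ ≤ 1 ∧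
    (∀ i < s, ⟪w, mulv (A ^ i) v⟫_ℝ = 0) ∧ r = ⟪w, mulv (A ^ s) v⟫_ℝ}

theorem krylovPairings_transpose : krylovPairings Aᵀ s = krylovPairings A s := by
  have key (B : Matrix ι ι ℝ) : krylovPairings B s ⊆ krylovPairings Bᵀ s := by
    rintro r ⟨v, w, hv, hw, horth, rfl⟩
    refine ⟨w, v, hw, hv, fun i hi => ?_, ?_⟩ <;> rw [← transpose_pow, inner_mulv_transpose]
    exact horth i hi
  exact Set.Subset.antisymm (by simpa using key Aᵀ) (key A)

theorem Phi_eq_sSup_krylovPairings [Nonempty ι] : Phi A s = sSup (krylovPairings A s) := by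
  simp only [Phi, sInf_monic_norm_eq]
  apply csSup_eq_csSup_of_forall_exists_le
  · rintro _ ⟨v, hv, rfl⟩
    obtain ⟨w, hw, hw1, hwx⟩ :=
      exists_inner_eq_norm_sub_starProjection (Krylov A s v) (mulv (A ^ s) v)
    exact ⟨_, ⟨v, w, hv.le, hw1, (mem_orthogonal_krylov_iff A s v w).1 hw, hwx.symm⟩, le_rfl⟩
  · rintro _ ⟨v, w, hv, hw1, horth, rfl⟩
    rcases eq_or_ne v 0 with rfl | hv0
    · obtain ⟨u, hu⟩ := exists_norm_eq (EuclideanSpace ℝ ι) zero_le_one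
      exact ⟨_, ⟨u, hu, rfl⟩, by simp [mulv_eq_toEuclideanLin]⟩
    set u := ‖v‖⁻¹ • v
    have hu : ‖u‖ = 1 := by simp [u, norm_smul, hv0]
    have hvu : ‖v‖ • u = v := by simp [u, smul_smul, hv0]
    have hw : w ∈ (Krylov A s u)ᗮ := by
      rw [mem_orthogonal_krylov_iff]
      intro i hi
      rw [mulv_eq_toEuclideanLin, map_smul, real_inner_smul_right, ← mulv_eq_toEuclideanLin,
        horth i hi, mul_zero]
    refine ⟨_, ⟨u, hu, rfl⟩, ?_⟩
    calc ⟪w, mulv (A ^ s) v⟫_ℝ = ‖v‖ * ⟪w, mulv (A ^ s) u⟫_ℝ := by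
          rw [← real_inner_smul_right, mulv_eq_toEuclideanLin, mulv_eq_toEuclideanLin,
            ← map_smul, hvu]
      _ ≤ ‖v‖ * ‖mulv (A ^ s) u - (Krylov A s u).starProjection (mulv (A ^ s) u)‖ :=
          mul_le_mul_of_nonneg_left (inner_le_norm_sub_starProjection _ _ hw hw1) (norm_nonneg v)
      _ ≤ _ := mul_le_of_le_one_left (norm_nonneg _) hv

end Krylov

theorem phi_transpose_general {n : ℕ} (A : Matrix (Fin n) (Fin n) ℝ) (s : ℕ) :
    Phi A s = Phi Aᵀ s := by
  cases isEmpty_or_nonempty (Fin n)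
  · rw [Subsingleton.elim Aᵀ A]
  · rw [Phi_eq_sSup_krylovPairings, Phi_eq_sSup_krylovPairings, krylovPairings_transpose]

theorem phi_transpose {n : ℕ} (A : Matrix (Fin n) (Fin n) ℝ) (s : ℕ)
    (hs1 : 1 ≤ s) (hs2 : s < dmin A) :
    Phi A s = Phi Aᵀ s :=
  phi_transpose_general A s
end
end

section
/- Let A ∈ ℝ^{n×n}, 1 ≤ s < d(A), and let v₀ ∈ ℝⁿ be a unit vector with d(A,v₀) ≥ s+1. Consider the Arnoldi cross iteration: w̃_k is the Arnoldi projection of v_k with respect to A and s, w_k = w̃_k/‖w̃_k‖, ṽ_{k+1} is the Arnoldi projection of w_k with respect to Aᵀ and s, v_{k+1} = ṽ_{k+1}/‖ṽ_{k+1}‖. Then all these vectors are well defined (the projections are nonzero), and for all k: ‖w̃_k‖ ≤ ‖ṽ_{k+1}‖ ≤ ‖w̃_{k+1}‖, with ‖w̃_k‖ = ‖ṽ_{k+1}‖ if and only if v_k = α v_{k+1} for some α ≠ 0. -/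
/-!
If `y` is the Arnoldi projection of a unit vector `x` with respect to `A`, then `y ⟂ K_s(A, x)`
forces `K_s(Aᵀ, y) ⟂ x`. Hence the Arnoldi projection `z` of `y / ‖y‖` with respect to `Aᵀ`
satisfies `⟪z, x⟫ = ⟪(Aᵀ)ˢ y, x⟫ / ‖y‖ = ⟪y, Aˢ x⟫ / ‖y‖ = ‖y‖`, and Cauchy–Schwarz gives
`‖y‖ ≤ ‖z‖`, with equality exactly when `x = z / ‖z‖`. Both half-steps of the iteration are of
this form (using `Aᵀᵀ = A`). The first projection is nonzero because otherwise `Aˢ v₀ ∈ K_s(A, v₀)`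
yields a monic annihilating polynomial of degree `s`; nonvanishing then propagates along the
increasing norms.
-/

open Polynomial Filter Topology Matrix

noncomputable section

def ACI {ι : Type*} [Fintype ι] [DecidableEq ι] (A : Matrix ι ι ℝ) (s : ℕ)
    (v wt w vt : ℕ → EuclideanSpace ℝ ι) : Prop :=
  (∀ k, IsArnoldiProj A s (v k) (wt k)) ∧
  (∀ k, w k = ‖wt k‖⁻¹ • wt k) ∧
  (∀ k, IsArnoldiProj Aᵀ s (w k) (vt (k + 1))) ∧
  (∀ k, v (k + 1) = ‖vt (k + 1)‖⁻¹ • vt (k + 1))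

lemma exists_ne_zero_smul_eq_iff_of_inner_pos {E : Type*} [NormedAddCommGroup E]
    [InnerProductSpace ℝ E] {x u : E} (hx : ‖x‖ = 1) (hu : ‖u‖ = 1) (h : 0 < inner ℝ u x) :
    (∃ α : ℝ, α ≠ 0 ∧ x = α • u) ↔ x = u := by
  refine ⟨?_, fun hxu => ⟨1, one_ne_zero, by rw [hxu, one_smul]⟩⟩
  rintro ⟨α, -, rfl⟩
  have hα_pos : 0 < α := by
    rwa [real_inner_smul_right, real_inner_self_eq_norm_sq, hu, one_pow, mul_one] at h
  rw [norm_smul, hu, mul_one, Real.norm_of_nonneg hα_pos.le] at hx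
  rw [hx, one_smul]

section ArnoldiCross

variable {ι : Type*} [Fintype ι]

lemma inner_mulv_left (B : Matrix ι ι ℝ) (x y : EuclideanSpace ℝ ι) :
    inner ℝ (mulv B x) y = (inner ℝ x (mulv Bᵀ y) : ℝ) := by
  simp only [mulv, EuclideanSpace.inner_eq_star_dotProduct, star_trivial, WithLp.equiv_symm_apply,
    WithLp.equiv_apply, Matrix.dotProduct_mulVec, Matrix.mulVec_transpose]

variable [DecidableEq ι]

lemma mulv_eq_toLpLin (B : Matrix ι ι ℝ) (x : EuclideanSpace ℝ ι) :
    mulv B x = Matrix.toLpLin 2 2 B x :=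
  rfl

variable {A : Matrix ι ι ℝ} {s : ℕ}

lemma inner_mulv_transpose_pow (x y : EuclideanSpace ℝ ι) :
    inner ℝ (mulv (Aᵀ ^ s) y) x = (inner ℝ y (mulv (A ^ s) x) : ℝ) := by
  rw [inner_mulv_left, ← transpose_pow, transpose_transpose]

lemma inner_eq_zero_of_mem_krylov_transpose {x y u : EuclideanSpace ℝ ι}
    (hy : ∀ u ∈ Krylov A s x, inner ℝ y u = (0 : ℝ)) (hu : u ∈ Krylov Aᵀ s y) :
    inner ℝ u x = (0 : ℝ) := by
  induction hu using Submodule.span_induction with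
  | mem _ h =>
    obtain ⟨i, rfl⟩ := h
    rw [inner_mulv_transpose_pow]
    exact hy _ (Submodule.subset_span ⟨i, rfl⟩)
  | zero => exact inner_zero_left _
  | add a b _ _ ha hb => rw [inner_add_left, ha, hb, add_zero]
  | smul c a _ ha => rw [real_inner_smul_left, ha, mul_zero]

lemma inner_arnoldiProj_transpose {x y z : EuclideanSpace ℝ ι} (c : ℝ)
    (hy : IsArnoldiProj A s x y) (hz : IsArnoldiProj Aᵀ s (c • y) z) :
    inner ℝ z x = c * ‖y‖ ^ 2 := by
  have hcy : ∀ u ∈ Krylov A s x, inner ℝ (c • y) u = (0 : ℝ) := fun u hu => by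
    rw [real_inner_smul_left, hy.2 u hu, mul_zero]
  have hzx : inner ℝ (z - mulv (Aᵀ ^ s) (c • y)) x = (0 : ℝ) :=
    inner_eq_zero_of_mem_krylov_transpose hcy hz.1
  have hyy : inner ℝ y (y - mulv (A ^ s) x) = (0 : ℝ) := hy.2 _ hy.1
  rw [inner_sub_left, sub_eq_zero] at hzx
  rw [inner_sub_right, sub_eq_zero] at hyy
  rw [hzx, inner_mulv_transpose_pow, real_inner_smul_left, ← hyy, real_inner_self_eq_norm_sq]

lemma norm_le_norm_arnoldiProj_transpose {x y z : EuclideanSpace ℝ ι} (hx : ‖x‖ = 1)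
    (hy : IsArnoldiProj A s x y) (hz : IsArnoldiProj Aᵀ s (‖y‖⁻¹ • y) z) : ‖y‖ ≤ ‖z‖ :=
  calc ‖y‖ = ‖y‖⁻¹ * ‖y‖ ^ 2 := by
        rcases eq_or_ne ‖y‖ 0 with h | h
        · simp [h]
        · field_simp
    _ = inner ℝ z x := (inner_arnoldiProj_transpose _ hy hz).symm
    _ ≤ ‖z‖ * ‖x‖ := real_inner_le_norm z x
    _ = ‖z‖ := by rw [hx, mul_one]

lemma arnoldiProj_transpose_ne_zero {x y z : EuclideanSpace ℝ ι} (hx : ‖x‖ = 1) (hy0 : y ≠ 0)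
    (hy : IsArnoldiProj A s x y) (hz : IsArnoldiProj Aᵀ s (‖y‖⁻¹ • y) z) : z ≠ 0 :=
  norm_pos_iff.1 ((norm_pos_iff.2 hy0).trans_le (norm_le_norm_arnoldiProj_transpose hx hy hz))

lemma norm_eq_norm_arnoldiProj_transpose_iff {x y z : EuclideanSpace ℝ ι} (hx : ‖x‖ = 1)
    (hy0 : y ≠ 0) (hy : IsArnoldiProj A s x y) (hz : IsArnoldiProj Aᵀ s (‖y‖⁻¹ • y) z) :
    ‖y‖ = ‖z‖ ↔ ∃ α : ℝ, α ≠ 0 ∧ x = α • (‖z‖⁻¹ • z) := by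
  have hy_pos : 0 < ‖y‖ := norm_pos_iff.2 hy0
  have hz0 : z ≠ 0 := arnoldiProj_transpose_ne_zero hx hy0 hy hz
  have hz_pos : 0 < ‖z‖ := norm_pos_iff.2 hz0
  have hu : ‖‖z‖⁻¹ • z‖ = 1 := norm_smul_inv_norm (𝕜 := ℝ) hz0
  have hux : inner ℝ (‖z‖⁻¹ • z) x = ‖y‖ / ‖z‖ := by
    rw [real_inner_smul_left, inner_arnoldiProj_transpose _ hy hz]
    field_simp
  calc ‖y‖ = ‖z‖ ↔ inner ℝ (‖z‖⁻¹ • z) x = (1 : ℝ) := by rw [hux, div_eq_one_iff_eq hz_pos.ne']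
    _ ↔ x = ‖z‖⁻¹ • z := (inner_eq_one_iff_of_norm_eq_one hu hx).trans eq_comm
    _ ↔ _ := (exists_ne_zero_smul_eq_iff_of_inner_pos hx hu (hux ▸ div_pos hy_pos hz_pos)).symm

lemma vgrade_le_of_mulv_pow_mem_krylov {v : EuclideanSpace ℝ ι}
    (h : mulv (A ^ s) v ∈ Krylov A s v) : vgrade A v ≤ s := by
  obtain ⟨c, hc⟩ := (Submodule.mem_span_range_iff_exists_fun ℝ).1 h
  set r : ℝ[X] := ∑ i : Fin s, C (c i) * X ^ (i : ℕ)
  have hr : r.degree < (X ^ s : ℝ[X]).degree := by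
    rw [degree_X_pow]; exact degree_sum_fin_lt c
  have hmonic : (X ^ s - r).Monic := (monic_X_pow s).sub_of_left hr
  have hdeg : (X ^ s - r).natDegree = s :=
    natDegree_eq_of_degree_eq_some (by rw [degree_sub_eq_left_of_degree_lt hr, degree_X_pow])
  have hr_eval : aeval A r = ∑ i : Fin s, c i • A ^ (i : ℕ) := by
    simp [r, Algebra.smul_def]
  refine Nat.sInf_le ⟨X ^ s - r, hmonic.ne_zero, hdeg, ?_⟩
  simp only [mulv_eq_toLpLin] at hc ⊢
  rw [map_sub, map_pow, aeval_X, hr_eval, map_sub, map_sum, LinearMap.sub_apply,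
    LinearMap.sum_apply]
  simp only [map_smul, LinearMap.smul_apply, hc, sub_self]

lemma arnoldiProj_ne_zero {v y : EuclideanSpace ℝ ι} (hs : s < vgrade A v)
    (hy : IsArnoldiProj A s v y) : y ≠ 0 := by
  rintro rfl
  refine hs.not_ge (vgrade_le_of_mulv_pow_mem_krylov ?_)
  simpa using (Krylov A s v).neg_mem hy.1

end ArnoldiCross

theorem aci_monotone_general {n : ℕ} (A : Matrix (Fin n) (Fin n) ℝ) (s : ℕ)
    (v wt w vt : ℕ → EuclideanSpace ℝ (Fin n))
    (hv0 : ‖v 0‖ = 1) (hg : s + 1 ≤ vgrade A (v 0))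
    (haci : ACI A s v wt w vt) :
    (∀ k, wt k ≠ 0 ∧ vt (k + 1) ≠ 0) ∧
    (∀ k, ‖wt k‖ ≤ ‖vt (k + 1)‖ ∧ ‖vt (k + 1)‖ ≤ ‖wt (k + 1)‖ ∧
      (‖wt k‖ = ‖vt (k + 1)‖ ↔ ∃ α : ℝ, α ≠ 0 ∧ v k = α • v (k + 1))) := by
  obtain ⟨hwt, hw, hvt, hv⟩ := haci
  have hvt' k : IsArnoldiProj Aᵀ s (‖wt k‖⁻¹ • wt k) (vt (k + 1)) := hw k ▸ hvt k
  have hwt' k : IsArnoldiProj Aᵀᵀ s (‖vt (k + 1)‖⁻¹ • vt (k + 1)) (wt (k + 1)) := by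
    rw [transpose_transpose, ← hv k]; exact hwt (k + 1)
  have hw_norm k (hwk : wt k ≠ 0) : ‖w k‖ = 1 := hw k ▸ norm_smul_inv_norm hwk
  have hvt_ne k (hvk : ‖v k‖ = 1) (hwk : wt k ≠ 0) : vt (k + 1) ≠ 0 :=
    arnoldiProj_transpose_ne_zero hvk hwk (hwt k) (hvt' k)
  have hinvariant k : ‖v k‖ = 1 ∧ wt k ≠ 0 := by
    induction k with
    | zero => exact ⟨hv0, arnoldiProj_ne_zero hg (hwt 0)⟩
    | succ k ih =>
      have hvtk := hvt_ne k ih.1 ih.2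
      exact ⟨hv k ▸ norm_smul_inv_norm hvtk,
        arnoldiProj_transpose_ne_zero (hw_norm k ih.2) hvtk (hvt k) (hwt' k)⟩
  refine ⟨fun k => ⟨(hinvariant k).2, hvt_ne k (hinvariant k).1 (hinvariant k).2⟩, fun k => ?_⟩
  obtain ⟨hvk, hwk⟩ := hinvariant k
  refine ⟨norm_le_norm_arnoldiProj_transpose hvk (hwt k) (hvt' k),
    norm_le_norm_arnoldiProj_transpose (hw_norm k hwk) (hvt k) (hwt' k), ?_⟩
  rw [hv k]
  exact norm_eq_norm_arnoldiProj_transpose_iff hvk hwk (hwt k) (hvt' k)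

theorem aci_monotone {n : ℕ} (A : Matrix (Fin n) (Fin n) ℝ) (s : ℕ)
    (hs1 : 1 ≤ s) (hs2 : s < dmin A)
    (v wt w vt : ℕ → EuclideanSpace ℝ (Fin n))
    (hv0 : ‖v 0‖ = 1) (hg : s + 1 ≤ vgrade A (v 0))
    (haci : ACI A s v wt w vt) :
    (∀ k, wt k ≠ 0 ∧ vt (k + 1) ≠ 0) ∧
    (∀ k, ‖wt k‖ ≤ ‖vt (k + 1)‖ ∧ ‖vt (k + 1)‖ ≤ ‖wt (k + 1)‖ ∧
      (‖wt k‖ = ‖vt (k + 1)‖ ↔ ∃ α : ℝ, α ≠ 0 ∧ v k = α • v (k + 1))) :=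
  aci_monotone_general A s v wt w vt hv0 hg haci
end
end

section
/- Let A = Aᵀ ∈ ℝ^{n×n} be symmetric, let 1 ≤ s < d(A), and let v₀ ∈ ℝⁿ be a unit vector with d(A,v₀) = s+1 exactly. Consider the iteration ṽ_{k+1} = Arnoldi projection of v_k with respect to A and s, v_{k+1} = ṽ_{k+1}/‖ṽ_{k+1}‖. Then the even-indexed iterates are all equal: v₀ = v₂ = v₄ = ⋯. -/
open Polynomial Filter Topology Matrix

noncomputable section

/-!
Let `W = K_{s+1}(A, v₀)`. Since `v₀` has grade `s + 1`, every `p(A) v₀` lies in `W`, so `W` is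
`A`-invariant and contains all iterates together with their Krylov spaces. By symmetry of `A`,
`v₁ ⟂ K_s(A, v₀)` turns into `v₀ ⟂ K_s(A, v₁)`, while `v₂ ⟂ K_s(A, v₁)` by construction. The
grade of `v₁` again exceeds `s`, so `K_s(A, v₁)` has dimension `s` and its orthogonal complement
in `W` is a line, containing the unit vectors `v₀` and `v₂`. They coincide because
`⟪v₀, ṽ₂⟫ = ⟪A^s v₀, v₁⟫ = ‖ṽ₁‖ > 0`.
-/

open scoped RealInnerProductSpace

section Mulv

variable {ι : Type*} [Fintype ι]

lemma mulv_mul (B C : Matrix ι ι ℝ) (v : EuclideanSpace ℝ ι) :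
    mulv (B * C) v = mulv B (mulv C v) := by
  simp [mulv, Matrix.mulVec_mulVec]

lemma mulv_zero (B : Matrix ι ι ℝ) : mulv B 0 = 0 := by
  simp [mulv]

lemma mulv_smul (B : Matrix ι ι ℝ) (c : ℝ) (v : EuclideanSpace ℝ ι) :
    mulv B (c • v) = c • mulv B v := by
  simp [mulv, Matrix.mulVec_smul]

end Mulv

section Krylov

variable {ι : Type*} [Fintype ι] [DecidableEq ι] (A : Matrix ι ι ℝ)

lemma mulv_one (v : EuclideanSpace ℝ ι) : mulv 1 v = v := by
  simp [mulv]

lemma mulv_aeval_mul (p q : ℝ[X]) (v : EuclideanSpace ℝ ι) :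
    mulv (aeval A (p * q)) v = mulv (aeval A p) (mulv (aeval A q) v) := by
  rw [map_mul, mulv_mul]

def aevalMulv (v : EuclideanSpace ℝ ι) : ℝ[X] →ₗ[ℝ] EuclideanSpace ℝ ι :=
  LinearMap.applyₗ v ∘ₗ Matrix.toEuclideanLin.toLinearMap ∘ₗ (aeval A).toLinearMap

@[simp] lemma aevalMulv_apply (v : EuclideanSpace ℝ ι) (p : ℝ[X]) :
    aevalMulv A v p = mulv (aeval A p) v := rfl

lemma krylov_eq_map (s : ℕ) (v : EuclideanSpace ℝ ι) :
    Krylov A s v = (degreeLT ℝ s).map (aevalMulv A v) := by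
  classical
  rw [degreeLT_eq_span_X_pow, Submodule.map_span, Krylov]
  congr 1
  ext x
  simp [Fin.exists_iff]

variable {A}

lemma mem_krylov_iff {s : ℕ} {v x : EuclideanSpace ℝ ι} :
    x ∈ Krylov A s v ↔ ∃ p : ℝ[X], p.degree < s ∧ mulv (aeval A p) v = x := by
  simp [krylov_eq_map, mem_degreeLT]

lemma vgrade_le_natDegree {v : EuclideanSpace ℝ ι} {p : ℝ[X]} (hp : p ≠ 0)
    (hpv : mulv (aeval A p) v = 0) : vgrade A v ≤ p.natDegree :=
  Nat.sInf_le ⟨p, hp, rfl, hpv⟩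

-- The characteristic polynomial kills `v`, so the infimum defining `vgrade` is attained.
lemma exists_monic_natDegree_vgrade (v : EuclideanSpace ℝ ι) :
    ∃ q : ℝ[X], q.Monic ∧ q.natDegree = vgrade A v ∧ mulv (aeval A q) v = 0 := by
  have hne : {d | ∃ p : ℝ[X], p ≠ 0 ∧ p.natDegree = d ∧ mulv (aeval A p) v = 0}.Nonempty :=
    ⟨_, A.charpoly, A.charpoly_monic.ne_zero, rfl, by
      rw [Matrix.aeval_self_charpoly]; simp [mulv]⟩
  obtain ⟨p, hp, hdeg, hpv⟩ := Nat.sInf_mem hne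
  refine ⟨p * C p.leadingCoeff⁻¹, monic_mul_leadingCoeff_inv hp, ?_, ?_⟩
  · rwa [natDegree_mul_C (inv_ne_zero (leadingCoeff_ne_zero.mpr hp))]
  · rw [mul_comm, mulv_aeval_mul, hpv, mulv_zero]

lemma lt_vgrade_iff {s : ℕ} {v : EuclideanSpace ℝ ι} :
    s < vgrade A v ↔ ∀ p : ℝ[X], p ≠ 0 → p.natDegree ≤ s → mulv (aeval A p) v ≠ 0 := by
  refine ⟨fun h p hp hdeg hpv => ?_, fun h => ?_⟩
  · have := vgrade_le_natDegree hp hpv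
    omega
  · by_contra! hle
    obtain ⟨q, hq, hdeg, hqv⟩ := exists_monic_natDegree_vgrade (A := A) v
    exact h q hq.ne_zero (hdeg ▸ hle) hqv

/-- Reducing modulo the monic polynomial of least degree that kills `v` shows that the Krylov
space of dimension `vgrade A v` is the whole cyclic space of `v`. -/
lemma mulv_aeval_mem_krylov_vgrade (v : EuclideanSpace ℝ ι) (f : ℝ[X]) :
    mulv (aeval A f) v ∈ Krylov A (vgrade A v) v := by
  obtain ⟨q, hq, hdeg, hqv⟩ := exists_monic_natDegree_vgrade (A := A) v
  refine mem_krylov_iff.mpr ⟨f %ₘ q, ?_, ?_⟩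
  · rw [← hdeg, ← degree_eq_natDegree hq.ne_zero]
    exact degree_modByMonic_lt f hq
  · have hdiv : aevalMulv A v (q * (f /ₘ q)) = 0 := by
      rw [aevalMulv_apply, mul_comm, mulv_aeval_mul, hqv, mulv_zero]
    have := congrArg (aevalMulv A v) (modByMonic_add_div f q)
    rwa [map_add, hdiv, add_zero] at this

lemma mulv_aeval_mem_krylov_vgrade_of_mem {v x : EuclideanSpace ℝ ι}
    (hx : x ∈ Krylov A (vgrade A v) v) (g : ℝ[X]) :
    mulv (aeval A g) x ∈ Krylov A (vgrade A v) v := by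
  obtain ⟨f, -, rfl⟩ := mem_krylov_iff.mp hx
  rw [← mulv_aeval_mul]
  exact mulv_aeval_mem_krylov_vgrade v (g * f)

lemma krylov_le_krylov_vgrade {v x : EuclideanSpace ℝ ι} (hx : x ∈ Krylov A (vgrade A v) v)
    (t : ℕ) : Krylov A t x ≤ Krylov A (vgrade A v) v := by
  intro u hu
  obtain ⟨p, -, rfl⟩ := mem_krylov_iff.mp hu
  exact mulv_aeval_mem_krylov_vgrade_of_mem hx p

lemma finrank_krylov {s : ℕ} {v : EuclideanSpace ℝ ι} (hs : s ≤ vgrade A v) :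
    Module.finrank ℝ (Krylov A s v) = s := by
  have hinj : Function.Injective ((aevalMulv A v).domRestrict (degreeLT ℝ s)) := by
    rw [← LinearMap.ker_eq_bot, Submodule.eq_bot_iff]
    rintro ⟨p, hp⟩ hker
    by_contra hne
    have hp0 : p ≠ 0 := fun h => hne (by simp [h])
    rw [mem_degreeLT, degree_eq_natDegree hp0, Nat.cast_lt] at hp
    have := vgrade_le_natDegree hp0 (by simpa using hker)
    omega
  rw [krylov_eq_map, ← LinearMap.range_domRestrict, LinearMap.finrank_range_of_inj hinj,
    (degreeLTEquiv ℝ s).finrank_eq, Module.finrank_fin_fun]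

end Krylov

section Symmetric

variable {ι : Type*} [Fintype ι] [DecidableEq ι] {A : Matrix ι ι ℝ}

lemma Matrix.IsSymm.aeval (hA : A.IsSymm) (p : ℝ[X]) : (aeval A p).IsSymm := by
  induction p using Polynomial.induction_on' with
  | add p q hp hq => rw [map_add]; exact hp.add hq
  | monomial n a => rw [aeval_monomial, ← Algebra.smul_def]; exact (hA.pow n).smul a

lemma inner_mulv_of_isSymm {B : Matrix ι ι ℝ} (hB : B.IsSymm) (x y : EuclideanSpace ℝ ι) :
    ⟪mulv B x, y⟫ = ⟪x, mulv B y⟫ :=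
  Matrix.isSymmetric_toEuclideanLin_iff.mpr (Matrix.isHermitian_iff_isSymm.mpr hB) x y

end Symmetric

section Arnoldi

variable {ι : Type*} [Fintype ι] [DecidableEq ι] {A : Matrix ι ι ℝ} {s : ℕ}
  {v w : EuclideanSpace ℝ ι}

lemma IsArnoldiProj.mem_orthogonal (h : IsArnoldiProj A s v w) : w ∈ (Krylov A s v)ᗮ :=
  (Submodule.mem_orthogonal' _ _).mpr h.2

lemma IsArnoldiProj.exists_monic (h : IsArnoldiProj A s v w) :
    ∃ q : ℝ[X], q.Monic ∧ q.natDegree = s ∧ mulv (aeval A q) v = w := by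
  obtain ⟨r, hr, hrv⟩ := mem_krylov_iff.mp h.1
  refine ⟨X ^ s + r, monic_X_pow_add hr, ?_, ?_⟩
  · rw [natDegree_add_eq_left_of_degree_lt (by rwa [degree_X_pow]), natDegree_X_pow]
  · rw [← aevalMulv_apply, map_add, aevalMulv_apply, aevalMulv_apply, hrv, map_pow, aeval_X,
      add_sub_cancel]

lemma IsArnoldiProj.ne_zero (h : IsArnoldiProj A s v w) (hv : s < vgrade A v) : w ≠ 0 := by
  obtain ⟨q, hq, hdeg, rfl⟩ := h.exists_monic
  exact lt_vgrade_iff.mp hv q hq.ne_zero hdeg.le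

lemma IsArnoldiProj.inner_mulv_aeval (h : IsArnoldiProj A s v w) {p : ℝ[X]}
    (hp : p.natDegree ≤ s) : ⟪w, mulv (aeval A p) v⟫ = p.coeff s * ‖w‖ ^ 2 := by
  obtain ⟨q, hq, hdeg, hqv⟩ := h.exists_monic
  have hlow : p - C (p.coeff s) * q ∈ degreeLT ℝ s := by
    rw [mem_degreeLT, degree_lt_iff_coeff_zero]
    intro m hm
    rcases hm.eq_or_lt with rfl | hlt
    · simp [← hdeg, hq.coeff_natDegree]
    · simp [coeff_eq_zero_of_natDegree_lt (hp.trans_lt hlt),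
        coeff_eq_zero_of_natDegree_lt (hdeg.le.trans_lt hlt)]
  have hsplit : mulv (aeval A p) v
      = aevalMulv A v (p - C (p.coeff s) * q) + p.coeff s • w := by
    rw [map_sub, ← smul_eq_C_mul, map_smul, aevalMulv_apply, aevalMulv_apply, hqv,
      sub_add_cancel]
  have horth : ⟪w, aevalMulv A v (p - C (p.coeff s) * q)⟫ = 0 :=
    h.2 _ ((krylov_eq_map A s v).symm ▸ Submodule.mem_map_of_mem hlow)
  rw [hsplit, inner_add_right, horth, real_inner_smul_right, real_inner_self_eq_norm_sq,
    zero_add]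

lemma IsArnoldiProj.inner_mulv_pow (h : IsArnoldiProj A s v w) :
    ⟪w, mulv (A ^ s) v⟫ = ‖w‖ ^ 2 := by
  simpa [natDegree_X_pow] using h.inner_mulv_aeval (p := X ^ s) (natDegree_X_pow s).le

lemma IsArnoldiProj.lt_vgrade_smul (hA : A.IsSymm) (h : IsArnoldiProj A s v w)
    (hv : s < vgrade A v) {c : ℝ} (hc : c ≠ 0) : s < vgrade A (c • w) := by
  have hw : w ≠ 0 := h.ne_zero hv
  refine lt_vgrade_iff.mpr fun p hp hdeg hpw => ?_
  rw [mulv_smul, smul_eq_zero, or_iff_right hc] at hpw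
  -- pad `p` to degree `s`, so that its `s`-th coefficient is the leading one
  set r : ℝ[X] := X ^ (s - p.natDegree) * p
  have hrdeg : r.natDegree ≤ s :=
    natDegree_mul_le.trans (by rw [natDegree_X_pow]; omega)
  have hrcoeff : r.coeff s = p.leadingCoeff := by
    have := coeff_X_pow_mul p (s - p.natDegree) p.natDegree
    rwa [Nat.add_sub_cancel' hdeg] at this
  have hinner := h.inner_mulv_aeval hrdeg
  rw [← inner_mulv_of_isSymm (hA.aeval r), mulv_aeval_mul, hpw, mulv_zero, inner_zero_left,
    hrcoeff] at hinner
  exact mul_ne_zero (leadingCoeff_ne_zero.mpr hp) (pow_ne_zero 2 (norm_ne_zero_iff.mpr hw))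
    hinner.symm

lemma IsArnoldiProj.mem_orthogonal_krylov_smul (hA : A.IsSymm) (h : IsArnoldiProj A s v w)
    (c : ℝ) : v ∈ (Krylov A s (c • w))ᗮ := by
  rw [Submodule.mem_orthogonal]
  intro u hu
  obtain ⟨p, hp, rfl⟩ := mem_krylov_iff.mp hu
  rw [inner_mulv_of_isSymm (hA.aeval p), real_inner_smul_left,
    h.2 _ (mem_krylov_iff.mpr ⟨p, hp, rfl⟩), mul_zero]

lemma IsArnoldiProj.inner_eq_of_isArnoldiProj_smul (hA : A.IsSymm) {w' : EuclideanSpace ℝ ι}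
    (h : IsArnoldiProj A s v w) {c : ℝ} (h' : IsArnoldiProj A s (c • w) w') :
    ⟪v, w'⟫ = c * ‖w‖ ^ 2 := by
  have hv := (Submodule.mem_orthogonal' _ _).mp (h.mem_orthogonal_krylov_smul hA c)
  calc ⟪v, w'⟫ = ⟪v, w' - mulv (A ^ s) (c • w)⟫ + ⟪v, mulv (A ^ s) (c • w)⟫ := by
        rw [← inner_add_right, sub_add_cancel]
    _ = ⟪mulv (A ^ s) v, c • w⟫ := by
        rw [hv _ h'.1, zero_add, inner_mulv_of_isSymm (hA.pow s)]
    _ = c * ‖w‖ ^ 2 := by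
        rw [real_inner_smul_right, real_inner_comm, h.inner_mulv_pow]

end Arnoldi

lemma eq_of_mem_of_finrank_eq_one {E : Type*} [NormedAddCommGroup E] [InnerProductSpace ℝ E]
    {U : Submodule ℝ E} (hU : Module.finrank ℝ U = 1) {x y : E} (hx : x ∈ U) (hy : y ∈ U)
    (hx1 : ‖x‖ = 1) (hy1 : ‖y‖ = 1) (hxy : 0 < ⟪x, y⟫) : x = y := by
  have hx0 : (⟨x, hx⟩ : U) ≠ 0 := by
    simp [← norm_ne_zero_iff, hx1]
  obtain ⟨c, hc⟩ := (finrank_eq_one_iff_of_nonzero' _ hx0).mp hU ⟨y, hy⟩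
  have hyc : y = c • x := by simpa using congrArg Subtype.val hc.symm
  rw [hyc, real_inner_smul_right, real_inner_self_eq_norm_sq, hx1] at hxy
  rw [hyc, norm_smul, hx1, mul_one, Real.norm_eq_abs, abs_of_pos (by simpa using hxy)] at hy1
  rw [hyc, hy1, one_smul]

theorem IsArnoldiProj.normalize_twice_eq {ι : Type*} [Fintype ι] [DecidableEq ι]
    {A : Matrix ι ι ℝ} (hA : A.IsSymm) {s : ℕ} {v₀ w₁ w₂ : EuclideanSpace ℝ ι}
    (hv₀ : ‖v₀‖ = 1) (hg : vgrade A v₀ = s + 1) (h₁ : IsArnoldiProj A s v₀ w₁)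
    (h₂ : IsArnoldiProj A s (‖w₁‖⁻¹ • w₁) w₂) : ‖w₂‖⁻¹ • w₂ = v₀ := by
  set v₁ := ‖w₁‖⁻¹ • w₁
  set W := Krylov A (vgrade A v₀) v₀
  set K := Krylov A s v₁
  have hw₁ : w₁ ≠ 0 := h₁.ne_zero (by omega)
  have hv₁ : s < vgrade A v₁ :=
    h₁.lt_vgrade_smul hA (by omega) (inv_ne_zero (norm_ne_zero_iff.mpr hw₁))
  have hw₂ : w₂ ≠ 0 := h₂.ne_zero hv₁
  have hv₀W : v₀ ∈ W := by simpa [mulv_one] using mulv_aeval_mem_krylov_vgrade (A := A) v₀ 1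
  have hv₁W : v₁ ∈ W := by
    obtain ⟨q, -, -, rfl⟩ := h₁.exists_monic
    exact W.smul_mem _ (mulv_aeval_mem_krylov_vgrade v₀ q)
  have hv₂W : ‖w₂‖⁻¹ • w₂ ∈ W := by
    obtain ⟨q, -, -, rfl⟩ := h₂.exists_monic
    exact W.smul_mem _ (mulv_aeval_mem_krylov_vgrade_of_mem hv₁W q)
  have hline : Module.finrank ℝ ↥(Kᗮ ⊓ W) = 1 :=
    Submodule.finrank_add_inf_finrank_orthogonal' (krylov_le_krylov_vgrade hv₁W s)
      (by rw [finrank_krylov hv₁.le, finrank_krylov le_rfl, hg])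
  have hv₀K : v₀ ∈ Kᗮ := h₁.mem_orthogonal_krylov_smul hA _
  have hv₂K : ‖w₂‖⁻¹ • w₂ ∈ Kᗮ := Kᗮ.smul_mem _ h₂.mem_orthogonal
  have hpos : 0 < ⟪‖w₂‖⁻¹ • w₂, v₀⟫ := by
    rw [real_inner_smul_left, real_inner_comm, h₁.inner_eq_of_isArnoldiProj_smul hA h₂]
    have := norm_pos_iff.mpr hw₁
    have := norm_pos_iff.mpr hw₂
    positivity
  exact eq_of_mem_of_finrank_eq_one hline ⟨hv₂K, hv₂W⟩ ⟨hv₀K, hv₀W⟩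
    (norm_smul_inv_norm hw₂) hv₀ hpos

theorem symmetric_even_iterates_constant_general {n : ℕ} (A : Matrix (Fin n) (Fin n) ℝ)
    (hA : A.IsSymm) (s : ℕ)
    (v vt : ℕ → EuclideanSpace ℝ (Fin n))
    (hv0 : ‖v 0‖ = 1) (hg : vgrade A (v 0) = s + 1)
    (hproj : ∀ k, IsArnoldiProj A s (v k) (vt (k + 1)))
    (hnorm : ∀ k, v (k + 1) = ‖vt (k + 1)‖⁻¹ • vt (k + 1)) :
    ∀ k, v (2 * k) = v 0 := by
  intro k
  induction k with
  | zero => rfl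
  | succ k ih =>
    calc v (2 * (k + 1)) = ‖vt (2 * k + 2)‖⁻¹ • vt (2 * k + 2) := hnorm (2 * k + 1)
      _ = v (2 * k) := (hproj (2 * k)).normalize_twice_eq hA (ih ▸ hv0) (ih ▸ hg)
          (hnorm (2 * k) ▸ hproj (2 * k + 1))
      _ = v 0 := ih

theorem symmetric_even_iterates_constant {n : ℕ} (A : Matrix (Fin n) (Fin n) ℝ)
    (hA : A.IsSymm) (s : ℕ) (hs1 : 1 ≤ s) (hs2 : s < dmin A)
    (v vt : ℕ → EuclideanSpace ℝ (Fin n))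
    (hv0 : ‖v 0‖ = 1) (hg : vgrade A (v 0) = s + 1)
    (hproj : ∀ k, IsArnoldiProj A s (v k) (vt (k + 1)))
    (hnorm : ∀ k, v (k + 1) = ‖vt (k + 1)‖⁻¹ • vt (k + 1)) :
    ∀ k, v (2 * k) = v 0 :=
  symmetric_even_iterates_constant_general A hA s v vt hv0 hg hproj hnorm
end
end

section
/- Let A = diag(λ₁,...,λₙ) ∈ ℝ^{n×n} with λ₁ < λ₂ < ⋯ < λₙ, and let v₀ be a unit vector with d(A,v₀) ≥ 2. Consider the iteration ṽ_{k+1} = (A − ρ_k I)v_k with ρ_k = v_kᵀ A v_k, v_{k+1} = ṽ_{k+1}/‖ṽ_{k+1}‖. Then the sequence of even-indexed iterates {v_{2k}} converges to a single limit vector. -/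
open Polynomial Filter Topology Matrix

noncomputable section

/-!
For symmetric `A`, `⟪v_k, ṽ_{k+2}⟫ = ‖ṽ_{k+1}‖`. Hence the residual norms `σ_k = ‖ṽ_{k+1}‖` increase
(Cauchy–Schwarz) to a limit `τ > 0`, and `⟪v_{k+2}, v_k⟫ = σ_k / σ_{k+1} → 1`, so
`‖v_{k+2} - v_k‖ → 0`. By continuity, every limit point `w` of `(v_{2k})` is a fixed point of two
steps at which both residuals have norm `τ`. For `A = diag(λ)` with distinct `λ_i` this says that
every `i` in the support of `w` is a root of `(λ - a)(λ - b) = τ²`, so `w` lives on two coordinates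
`i, j` with `w_i²(1 - w_i²)(λ_i - λ_j)² = τ²`: there are only finitely many limit points. A sequence
in a compact set with finitely many cluster points and vanishing steps converges.
-/

open scoped RealInnerProductSpace

section ClusterPoints

variable {X : Type*} [MetricSpace X]

theorem Set.Finite.exists_pos_forall_le_dist {C : Set X} (hC : C.Finite) :
    ∃ δ > 0, ∀ x ∈ C, ∀ y ∈ C, x ≠ y → δ ≤ dist x y := by
  rcases C.subsingleton_or_nontrivial with hsub | hnt
  · exact ⟨1, one_pos, fun x hx y hy hxy => absurd (hsub hx hy) hxy⟩
  · exact ⟨C.infsep, hC.infsep_pos_iff_nontrivial.2 hnt,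
      fun x hx y hy hxy => Set.infsep_le_dist_of_mem hx hy hxy⟩

theorem forall_dist_lt_of_forall_near_separated {u : ℕ → X} {C : Set X} {δ : ℝ}
    (hsep : ∀ x ∈ C, ∀ y ∈ C, x ≠ y → δ ≤ dist x y) {N : ℕ}
    (hnear : ∀ k ≥ N, ∃ c ∈ C, dist (u k) c < δ / 3)
    (hstep : ∀ k ≥ N, dist (u (k + 1)) (u k) < δ / 3) {c : X} (hc : c ∈ C)
    (hN : dist (u N) c < δ / 3) : ∀ k ≥ N, dist (u k) c < δ / 3 := by
  intro k hk
  induction k, hk using Nat.le_induction with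
  | base => exact hN
  | succ k hk ih =>
    obtain ⟨c', hc', hdist⟩ := hnear (k + 1) (by omega)
    obtain rfl : c' = c := by
      by_contra hne
      have := hsep c' hc' c hc hne
      have := dist_triangle4 c' (u (k + 1)) (u k) c
      linarith [dist_comm c' (u (k + 1)), hstep k hk]
    exact hdist

theorem IsCompact.exists_tendsto_of_finite_mapClusterPt {s : Set X} (hs : IsCompact s)
    {u : ℕ → X} (hu : ∀ k, u k ∈ s) (hfin : {x | MapClusterPt x atTop u}.Finite)
    (hstep : Tendsto (fun k => dist (u (k + 1)) (u k)) atTop (𝓝 0)) :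
    ∃ x, Tendsto u atTop (𝓝 x) := by
  set C := {x | MapClusterPt x atTop u}
  obtain ⟨δ, hδ, hsep⟩ := hfin.exists_pos_forall_le_dist
  have hnear : ∀ᶠ k in atTop, ∃ c ∈ C, dist (u k) c < δ / 3 :=
    (hs.tendsto_nhdsSet_of_mapClusterPt (.of_forall hu) fun x _ hx => hx).eventually_mem
      (Metric.thickening_mem_nhdsSet C (by positivity)) |>.mono fun k hk =>
        Metric.mem_thickening_iff.1 hk
  have hsmall : ∀ᶠ k in atTop, dist (u (k + 1)) (u k) < δ / 3 :=
    hstep.eventually_lt_const (by positivity)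
  obtain ⟨N, hN⟩ := eventually_atTop.1 (hnear.and hsmall)
  obtain ⟨c, hc, hNc⟩ := (hN N le_rfl).1
  have htrap := forall_dist_lt_of_forall_near_separated hsep (fun k hk => (hN k hk).1)
    (fun k hk => (hN k hk).2) hc hNc
  refine ⟨c, hs.tendsto_nhds_of_unique_mapClusterPt (.of_forall hu) fun x _ hx => ?_⟩
  by_contra hxc
  have hx_near : x ∈ Metric.closedBall c (δ / 3) :=
    Metric.isClosed_closedBall.mem_of_mapClusterPt hx
      (eventually_atTop.2 ⟨N, fun k hk => (htrap k hk).le⟩)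
  linarith [hsep x hx c hc hxc, Metric.mem_closedBall.1 hx_near]

end ClusterPoints

theorem Function.Injective.exists_support_subset_pair_of_quadratic {ι : Type*} {lam : ι → ℝ}
    (hlam : Function.Injective lam) {w : ι → ℝ} (hw : w ≠ 0) {a b c : ℝ}
    (h : ∀ i, w i ≠ 0 → (lam i - a) * (lam i - b) = c) :
    ∃ i j, ∀ k, k ≠ i → k ≠ j → w k = 0 := by
  obtain ⟨i, hi⟩ := Function.ne_iff.1 hw
  have hvieta : ∀ j k, w j ≠ 0 → w k ≠ 0 → j ≠ k → lam j + lam k = a + b := by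
    intro j k hj hk hjk
    have := mul_left_cancel₀ (sub_ne_zero.2 (hlam.ne hjk))
      (by linear_combination h j hj - h k hk :
        (lam j - lam k) * (lam j + lam k - (a + b)) = (lam j - lam k) * 0)
    linarith
  by_cases hj : ∃ j ≠ i, w j ≠ 0
  · obtain ⟨j, hji, hj⟩ := hj
    refine ⟨i, j, fun k hki hkj => by_contra fun hk => hji (hlam ?_)⟩
    linarith [hvieta k i hk hi hki, hvieta k j hk hj hkj]
  · push Not at hj
    exact ⟨i, i, fun k hki _ => hj k hki⟩

namespace SteepestDescent

section SymmetricOperator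

variable {E : Type*} [NormedAddCommGroup E] [InnerProductSpace ℝ E] (T : E →L[ℝ] E)

/-- For a unit vector `v_k`, `residual T v_k` is the paper's `ṽ_{k+1} = (A - ρ_k I) v_k`. -/
def residual (x : E) : E := T x - ⟪x, T x⟫ • x

/-- At an eigenvector the step is `‖0‖⁻¹ • 0 = 0`, after which the iteration stays at `0`. -/
def step (x : E) : E := ‖residual T x‖⁻¹ • residual T x

variable {T}

theorem continuous_residual : Continuous (residual T) := by
  unfold residual; fun_prop

theorem continuousAt_step {x : E} (hx : residual T x ≠ 0) : ContinuousAt (step T) x :=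
  (continuous_residual.continuousAt.norm.inv₀ (norm_ne_zero_iff.2 hx)).smul
    continuous_residual.continuousAt

theorem step_eq_zero {x : E} (hx : residual T x = 0) : step T x = 0 := by
  simp [step, hx]

theorem residual_zero : residual T 0 = 0 := by
  simp [residual]

theorem norm_step {x : E} (hx : residual T x ≠ 0) : ‖step T x‖ = 1 := by
  rw [step, norm_smul, norm_inv, norm_norm, inv_mul_cancel₀ (norm_ne_zero_iff.2 hx)]

theorem inner_residual_eq_zero {x : E} (hx : ‖x‖ = 1) : ⟪x, residual T x⟫ = 0 := by
  rw [residual, inner_sub_right, inner_smul_right, real_inner_self_eq_norm_sq, hx]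
  ring

theorem inner_step_eq_zero {x : E} (hx : ‖x‖ = 1) : ⟪x, step T x⟫ = 0 := by
  rw [step, inner_smul_right, inner_residual_eq_zero hx, mul_zero]

theorem norm_residual_le {x : E} (hx : ‖x‖ = 1) : ‖residual T x‖ ≤ ‖T‖ := by
  have horth : ⟪residual T x, ⟪x, T x⟫ • x⟫ = 0 := by
    rw [inner_smul_right, real_inner_comm x, inner_residual_eq_zero hx, mul_zero]
  have hpyth := norm_add_sq_eq_norm_sq_add_norm_sq_real horth
  rw [show residual T x + ⟪x, T x⟫ • x = T x from sub_add_cancel _ _] at hpyth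
  have hTx : ‖T x‖ ≤ ‖T‖ := by simpa [hx] using T.le_opNorm x
  nlinarith [norm_nonneg (residual T x), norm_nonneg (⟪x, T x⟫ • x), norm_nonneg (T x)]

theorem inner_residual_step (hT : (T : E →ₗ[ℝ] E).IsSymmetric) {x : E} (hx : ‖x‖ = 1) :
    ⟪x, residual T (step T x)⟫ = ‖residual T x‖ := by
  have hxy := inner_step_eq_zero (T := T) hx
  have hTx : T x = residual T x + ⟪x, T x⟫ • x := by simp [residual]
  calc ⟪x, residual T (step T x)⟫ = ⟪T x, step T x⟫ := by
        rw [residual, inner_sub_right, inner_smul_right, hxy, mul_zero, sub_zero]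
        exact (hT x _).symm
    _ = ⟪residual T x, step T x⟫ := by
        rw [hTx, inner_add_left, inner_smul_left, hxy, mul_zero, add_zero]
    _ = ‖residual T x‖ := by
        rw [step, inner_smul_right, real_inner_self_eq_norm_sq, sq, ← mul_assoc, inv_mul_mul_self]

theorem norm_residual_le_norm_residual_step (hT : (T : E →ₗ[ℝ] E).IsSymmetric) {x : E}
    (hx : ‖x‖ = 1) : ‖residual T x‖ ≤ ‖residual T (step T x)‖ := by
  simpa [← inner_residual_step hT hx, hx] using real_inner_le_norm x (residual T (step T x))

theorem inner_step_step (hT : (T : E →ₗ[ℝ] E).IsSymmetric) {x : E} (hx : ‖x‖ = 1) :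
    ⟪step T (step T x), x⟫ = ‖residual T x‖ / ‖residual T (step T x)‖ := by
  rw [step.eq_1 T (step T x), inner_smul_left, real_inner_comm, inner_residual_step hT hx]
  simp [div_eq_inv_mul]

variable {v : ℕ → E}

theorem norm_eq_one_and_residual_ne_zero (hT : (T : E →ₗ[ℝ] E).IsSymmetric)
    (hv : ∀ k, v (k + 1) = step T (v k)) (hv0 : ‖v 0‖ = 1) (h0 : residual T (v 0) ≠ 0)
    (k : ℕ) : ‖v k‖ = 1 ∧ residual T (v k) ≠ 0 := by
  induction k with
  | zero => exact ⟨hv0, h0⟩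
  | succ k ih =>
    rw [hv k]
    refine ⟨norm_step ih.2, fun h => ih.2 (norm_eq_zero.1 (le_antisymm ?_ (norm_nonneg _)))⟩
    simpa [h] using norm_residual_le_norm_residual_step hT ih.1

theorem exists_tendsto_norm_residual (hT : (T : E →ₗ[ℝ] E).IsSymmetric)
    (hv : ∀ k, v (k + 1) = step T (v k)) (hv0 : ‖v 0‖ = 1) (h0 : residual T (v 0) ≠ 0) :
    ∃ τ > 0, Tendsto (fun k => ‖residual T (v k)‖) atTop (𝓝 τ) := by
  have hunit k := (norm_eq_one_and_residual_ne_zero hT hv hv0 h0 k).1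
  have hmono : Monotone fun k => ‖residual T (v k)‖ :=
    monotone_nat_of_le_succ fun k => hv k ▸ norm_residual_le_norm_residual_step hT (hunit k)
  have hbdd : BddAbove (Set.range fun k => ‖residual T (v k)‖) :=
    ⟨‖T‖, by rintro _ ⟨k, rfl⟩; exact norm_residual_le (hunit k)⟩
  exact ⟨_, (norm_pos_iff.2 h0).trans_le (le_ciSup hbdd 0), tendsto_atTop_ciSup hmono hbdd⟩

theorem tendsto_dist_add_two (hT : (T : E →ₗ[ℝ] E).IsSymmetric)
    (hv : ∀ k, v (k + 1) = step T (v k)) (hunit : ∀ k, ‖v k‖ = 1) {τ : ℝ} (hτ : τ ≠ 0)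
    (hσ : Tendsto (fun k => ‖residual T (v k)‖) atTop (𝓝 τ)) :
    Tendsto (fun k => dist (v (k + 2)) (v k)) atTop (𝓝 0) := by
  set σ := fun k => ‖residual T (v k)‖
  have hdist : ∀ k, dist (v (k + 2)) (v k) = √(2 - 2 * (σ k / σ (k + 1))) := by
    intro k
    have hinner : ⟪v (k + 2), v k⟫ = σ k / σ (k + 1) := by
      rw [hv, hv k, inner_step_step hT (hunit k), ← hv k]
    rw [← hinner, ← Real.sqrt_sq dist_nonneg, dist_eq_norm, norm_sub_sq_real, hunit, hunit]
    ring_nf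
  have hlim : Tendsto (fun k => √(2 - 2 * (σ k / σ (k + 1)))) atTop (𝓝 √(2 - 2 * (τ / τ))) :=
    ((hσ.div (hσ.comp (tendsto_add_atTop_nat 1)) hτ).const_mul 2 |>.const_sub 2).sqrt
  simpa [hdist, div_self hτ] using hlim

theorem norm_residual_eq_and_tendsto_step (hv : ∀ k, v (k + 1) = step T (v k)) {τ : ℝ}
    (hτ : τ ≠ 0) (hσ : Tendsto (fun k => ‖residual T (v k)‖) atTop (𝓝 τ)) {t : ℕ → ℕ}
    (ht : Tendsto t atTop atTop) {w : E} (hw : Tendsto (fun l => v (t l)) atTop (𝓝 w)) :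
    ‖residual T w‖ = τ ∧ Tendsto (fun l => v (t l + 1)) atTop (𝓝 (step T w)) := by
  have hr : ‖residual T w‖ = τ :=
    tendsto_nhds_unique ((continuous_residual.tendsto w).comp hw).norm (hσ.comp ht)
  refine ⟨hr, ?_⟩
  simp only [hv]
  exact (continuousAt_step (norm_ne_zero_iff.1 (hr ▸ hτ))).tendsto.comp hw

theorem step_step_eq_of_tendsto (hv : ∀ k, v (k + 1) = step T (v k)) {τ : ℝ} (hτ : τ ≠ 0)
    (hσ : Tendsto (fun k => ‖residual T (v k)‖) atTop (𝓝 τ))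
    (hdist : Tendsto (fun k => dist (v (k + 2)) (v k)) atTop (𝓝 0)) {t : ℕ → ℕ}
    (ht : Tendsto t atTop atTop) {w : E} (hw : Tendsto (fun l => v (t l)) atTop (𝓝 w)) :
    ‖residual T w‖ = τ ∧ ‖residual T (step T w)‖ = τ ∧ step T (step T w) = w := by
  obtain ⟨h1, hw1⟩ := norm_residual_eq_and_tendsto_step hv hτ hσ ht hw
  obtain ⟨h2, hw2⟩ :=
    norm_residual_eq_and_tendsto_step hv hτ hσ ((tendsto_add_atTop_nat 1).comp ht) hw1
  exact ⟨h1, h2, dist_eq_zero.1 (tendsto_nhds_unique (hw2.dist hw) (hdist.comp ht))⟩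

end SymmetricOperator

section Diagonal

variable {ι : Type*} [Fintype ι] [DecidableEq ι] {lam : ι → ℝ}

local notation "D" lam => toEuclideanCLM (𝕜 := ℝ) (diagonal lam)

theorem isSymmetric_toEuclideanCLM_diagonal (lam : ι → ℝ) :
    (D lam : EuclideanSpace ℝ ι →ₗ[ℝ] _).IsSymmetric := by
  rw [coe_toEuclideanCLM_eq_toEuclideanLin, isSymmetric_toEuclideanLin_iff]
  exact isHermitian_diagonal_iff.2 fun _ => .all _

theorem toEuclideanCLM_diagonal_apply (x : EuclideanSpace ℝ ι) (i : ι) :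
    (D lam) x i = lam i * x i := by
  rw [ofLp_toEuclideanCLM, mulVec_diagonal]

theorem inner_toEuclideanCLM_diagonal (x : EuclideanSpace ℝ ι) :
    ⟪x, (D lam) x⟫ = ∑ i, lam i * x i ^ 2 := by
  refine Finset.sum_congr rfl fun i _ => ?_
  simp only [toEuclideanCLM_diagonal_apply, RCLike.inner_apply, conj_trivial]
  ring

theorem residual_diagonal_apply (x : EuclideanSpace ℝ ι) (i : ι) :
    residual (D lam) x i = (lam i - ⟪x, (D lam) x⟫) * x i := by
  simp only [residual, PiLp.sub_apply, PiLp.smul_apply, smul_eq_mul,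
    toEuclideanCLM_diagonal_apply]
  ring

theorem step_step_diagonal_apply (w : EuclideanSpace ℝ ι) (i : ι) :
    step (D lam) (step (D lam) w) i =
      (‖residual (D lam) w‖ * ‖residual (D lam) (step (D lam) w)‖)⁻¹ *
        ((lam i - ⟪step (D lam) w, (D lam) (step (D lam) w)⟫) * (lam i - ⟪w, (D lam) w⟫)) *
          w i := by
  simp only [step, PiLp.smul_apply, smul_eq_mul, residual_diagonal_apply]
  ring

theorem sub_mul_sub_eq_of_step_step_eq {w : EuclideanSpace ℝ ι}
    (hfix : step (D lam) (step (D lam) w) = w) {i : ι} (hi : w i ≠ 0) :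
    (lam i - ⟪step (D lam) w, (D lam) (step (D lam) w)⟫) * (lam i - ⟪w, (D lam) w⟫) =
      ‖residual (D lam) w‖ * ‖residual (D lam) (step (D lam) w)‖ := by
  have hcoord := congrArg (· i) hfix
  simp only [step_step_diagonal_apply] at hcoord
  have hone := mul_right_cancel₀ hi (hcoord.trans (one_mul _).symm)
  have hne : ‖residual (D lam) w‖ * ‖residual (D lam) (step (D lam) w)‖ ≠ 0 := by
    rintro h
    simp [h] at hone
  exact ((inv_mul_eq_one₀ hne).1 hone).symm

theorem norm_residual_diagonal_sq {w : EuclideanSpace ℝ ι} (hw : ‖w‖ = 1) {i j : ι}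
    (hsupp : ∀ k, k ≠ i → k ≠ j → w k = 0) :
    ‖residual (D lam) w‖ ^ 2 = (lam i - lam j) ^ 2 * (w i ^ 2 - w i ^ 4) := by
  have hnorm : ∑ k, w k ^ 2 = 1 := by simpa [hw] using (EuclideanSpace.norm_sq_eq w).symm
  have hres : ‖residual (D lam) w‖ ^ 2 = ∑ k, ((lam k - ⟪w, (D lam) w⟫) * w k) ^ 2 := by
    simp only [EuclideanSpace.norm_sq_eq, residual_diagonal_apply, Real.norm_eq_abs, sq_abs]
  rw [hres, inner_toEuclideanCLM_diagonal]
  rcases eq_or_ne i j with rfl | hij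
  · have hsingle {f : ι → ℝ} (hf : ∀ k, w k = 0 → f k = 0) : ∑ k, f k = f i :=
      Fintype.sum_eq_single i fun k hk => hf k (hsupp k hk hk)
    rw [hsingle (f := fun k => w k ^ 2) (by simp +contextual)] at hnorm
    rw [hsingle (by simp +contextual),
      hsingle (f := fun k => lam k * w k ^ 2) (by simp +contextual)]
    linear_combination lam i ^ 2 * (w i ^ 2 - 1) * w i ^ 2 * hnorm
  · have hpair {f : ι → ℝ} (hf : ∀ k, w k = 0 → f k = 0) : ∑ k, f k = f i + f j :=
      Fintype.sum_eq_add i j hij fun k hk => hf k (hsupp k hk.1 hk.2)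
    rw [hpair (f := fun k => w k ^ 2) (by simp +contextual)] at hnorm
    rw [hpair (by simp +contextual),
      hpair (f := fun k => lam k * w k ^ 2) (by simp +contextual)]
    have hj : w j ^ 2 = 1 - w i ^ 2 := by linarith
    simp only [mul_pow, hj]
    ring

theorem finite_setOf_norm_residual_diagonal_eq (lam : ι → ℝ) {τ : ℝ} (hτ : τ ≠ 0) :
    {w : EuclideanSpace ℝ ι | ‖w‖ = 1 ∧ ‖residual (D lam) w‖ = τ ∧
      ∃ i j, ∀ k, k ≠ i → k ≠ j → w k = 0}.Finite := by
  set Q : ι → ι → ℝ[X] := fun i j => C ((lam i - lam j) ^ 2) * (X ^ 2 - X ^ 4) - C (τ ^ 2)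
  have hQ i j : Q i j ≠ 0 := fun h => by
    simpa [Q, hτ] using congrArg (eval 0) h
  have hroot {w : EuclideanSpace ℝ ι} (hw : ‖w‖ = 1) (hr : ‖residual (D lam) w‖ = τ) {i j : ι}
      (hsupp : ∀ k, k ≠ i → k ≠ j → w k = 0) : (Q i j).IsRoot (w i) := by
    simp only [Q, IsRoot, eval_sub, eval_mul, eval_C, eval_pow, eval_X]
    rw [← hr, norm_residual_diagonal_sq hw hsupp]
    ring
  have hcoord i : (insert 0 (⋃ j, {a | (Q i j).IsRoot a})).Finite :=
    (Set.finite_iUnion fun j => finite_setOfPred_isRoot (hQ i j)).insert 0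
  refine ((Set.Finite.pi hcoord).preimage (WithLp.ofLp_injective 2).injOn).subset ?_
  rintro w ⟨hw, hr, i, j, hsupp⟩ k -
  by_cases hki : k = i
  · subst hki
    exact .inr (Set.mem_iUnion.2 ⟨j, hroot hw hr hsupp⟩)
  by_cases hkj : k = j
  · subst hkj
    exact .inr (Set.mem_iUnion.2 ⟨i, hroot hw hr fun l hlk hli => hsupp l hli hlk⟩)
  exact .inl (hsupp k hki hkj)

theorem exists_tendsto_even_of_diagonal (hlam : Function.Injective lam)
    {v : ℕ → EuclideanSpace ℝ ι} (hv : ∀ k, v (k + 1) = step (D lam) (v k)) (hv0 : ‖v 0‖ = 1) :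
    ∃ w, Tendsto (fun k => v (2 * k)) atTop (𝓝 w) := by
  have hT := isSymmetric_toEuclideanCLM_diagonal lam
  rcases eq_or_ne (residual (D lam) (v 0)) 0 with h0 | h0
  · have hzero k : v (k + 1) = 0 := by
      induction k with
      | zero => rw [hv, step_eq_zero h0]
      | succ k ih => rw [hv, ih, step_eq_zero residual_zero]
    refine ⟨0, tendsto_const_nhds.congr' ((eventually_ge_atTop 1).mono fun k hk => ?_)⟩
    dsimp only
    rw [show 2 * k = 2 * k - 1 + 1 by omega, hzero]
  obtain ⟨τ, hτ, hσ⟩ := exists_tendsto_norm_residual hT hv hv0 h0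
  have hunit k := (norm_eq_one_and_residual_ne_zero hT hv hv0 h0 k).1
  have hdist := tendsto_dist_add_two hT hv hunit hτ.ne' hσ
  have htwo : Tendsto (fun k : ℕ => 2 * k) atTop atTop := tendsto_id.const_mul_atTop' two_pos
  have hsphere k : v (2 * k) ∈ Metric.sphere (0 : EuclideanSpace ℝ ι) 1 := by simp [hunit]
  refine (isCompact_sphere 0 1).exists_tendsto_of_finite_mapClusterPt hsphere
    ((finite_setOf_norm_residual_diagonal_eq lam hτ.ne').subset fun w hw => ?_) (hdist.comp htwo)
  obtain ⟨ψ, hψ, hlim⟩ := hw.tendsto_subseq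
  obtain ⟨hr, -, hfix⟩ :=
    step_step_eq_of_tendsto hv hτ.ne' hσ hdist (htwo.comp hψ.tendsto_atTop) hlim
  have hw1 : ‖w‖ = 1 := by
    simpa using Metric.isClosed_sphere.mem_of_mapClusterPt hw (.of_forall hsphere)
  refine ⟨hw1, hr, hlam.exists_support_subset_pair_of_quadratic ?_
    fun i hi => sub_mul_sub_eq_of_step_step_eq hfix hi⟩
  rintro h
  simp [show w = 0 from WithLp.ofLp_injective 2 h] at hw1

end Diagonal

end SteepestDescent

theorem steepest_descent_even_converges_general {n : ℕ} (lam : Fin n → ℝ) (hlam : StrictMono lam)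
    (v vt : ℕ → EuclideanSpace ℝ (Fin n)) (hv0 : ‖v 0‖ = 1)
    (hstep : ∀ k, vt (k + 1) = mulv (Matrix.diagonal lam) (v k) -
      (inner ℝ (v k) (mulv (Matrix.diagonal lam) (v k)) : ℝ) • v k)
    (hnorm : ∀ k, v (k + 1) = ‖vt (k + 1)‖⁻¹ • vt (k + 1)) :
    ∃ vstar : EuclideanSpace ℝ (Fin n), Tendsto (fun k => v (2 * k)) atTop (𝓝 vstar) :=
  SteepestDescent.exists_tendsto_even_of_diagonal hlam.injective
    (fun k => by rw [hnorm k, hstep k]; rfl) hv0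

theorem steepest_descent_even_converges {n : ℕ} (lam : Fin n → ℝ) (hlam : StrictMono lam)
    (v vt : ℕ → EuclideanSpace ℝ (Fin n)) (hv0 : ‖v 0‖ = 1)
    (hg : 2 ≤ vgrade (Matrix.diagonal lam) (v 0))
    (hstep : ∀ k, vt (k + 1) = mulv (Matrix.diagonal lam) (v k) -
      (inner ℝ (v k) (mulv (Matrix.diagonal lam) (v k)) : ℝ) • v k)
    (hnorm : ∀ k, v (k + 1) = ‖vt (k + 1)‖⁻¹ • vt (k + 1)) :
    ∃ vstar : EuclideanSpace ℝ (Fin n), Tendsto (fun k => v (2 * k)) atTop (𝓝 vstar) :=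
  steepest_descent_even_converges_general lam hlam v vt hv0 hstep hnorm
end
end

section
/- Let A = diag(G₁,...,G_m,[1]) ∈ ℝ^{n×n} (possibly without the block [1]) be orthogonal with rotation blocks G_j having cosines 0 < c₁ < ⋯ < c_m < 1, and let v₀ be a unit vector with d(A,v₀) ≥ 2 and nonzero first block v₀^{(1)} ≠ 0. Then the ACI(1) sequence {v_k} converges to a single limit vector; in fact ‖v_{k+1} − v_k‖ ≤ √3 · ρ^k for some 0 < ρ < 1 and all sufficiently large k, so Σ_k ‖v_{k+1} − v_k‖ < ∞. -/
open Polynomial Filter Topology Matrix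

noncomputable section

def blockRot (m e : ℕ) (c s : Fin m → ℝ) :
    Matrix ((Fin m × Fin 2) ⊕ Fin e) ((Fin m × Fin 2) ⊕ Fin e) ℝ :=
  fun i j => match i, j with
  | Sum.inl (a, x), Sum.inl (b, y) =>
      if a = b then
        (if x = y then c a else if (x : ℕ) = 0 then s a else -(s a))
      else 0
  | Sum.inr i, Sum.inr j => if i = j then 1 else 0
  | _, _ => 0


/-
Read the `j`-th rotation block of a vector as a complex number. Then `blockRot` multiplies block
`j` by `c j - s j * I` and fixes the remaining coordinates, so a half step of ACI(1) with Rayleigh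
quotient `t` multiplies block `j` by `c j - t ∓ s j * I` and the fixed part by `1 - t`, up to the
normalisation. The Rayleigh quotients lie in `[c j₀, 1]`, where `|c j - t ∓ s j * I|² =
1 - 2 t c j + t²` is decreasing in `c j`; with a gap `δ` between `c j₀` and the other cosines, the
ratio of the squared mass off block `j₀` to the squared mass on it therefore shrinks by
`q = 1 - c j₀ δ < 1` at every half step, whatever the normalisation. After `k` steps both Rayleigh
quotients are within `O(q^(2k))` of `c j₀`, so a full step multiplies block `j₀` by a complex number
of argument `O(q^(2k))` and of modulus close to `1`, while only `O(q^(2k))` of the mass lies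
elsewhere. Hence `‖v (k+1) - v k‖ = O(q^k)`.
-/

lemma sub_sq_add_sq_le_of_gap {c₀ s₀ c' s' t δ : ℝ} (h₀ : c₀ ^ 2 + s₀ ^ 2 = 1)
    (h' : c' ^ 2 + s' ^ 2 = 1) (hc₀ : 0 ≤ c₀) (hδ : 0 ≤ δ) (hc' : c₀ + δ ≤ c') (ht₀ : c₀ ≤ t)
    (ht₁ : t ≤ 1) :
    (c' - t) ^ 2 + s' ^ 2 ≤ (1 - c₀ * δ) * ((c₀ - t) ^ 2 + s₀ ^ 2) := by
  have hdiff : (c₀ - t) ^ 2 + s₀ ^ 2 - ((c' - t) ^ 2 + s' ^ 2) = 2 * t * (c' - c₀) := by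
    linear_combination h₀ - h'
  have hle_two : (c₀ - t) ^ 2 + s₀ ^ 2 ≤ 2 := by nlinarith
  have hgain : c₀ * δ * ((c₀ - t) ^ 2 + s₀ ^ 2) ≤ 2 * t * (c' - c₀) := by
    nlinarith [mul_nonneg hc₀ hδ, mul_le_mul ht₀ (show δ ≤ c' - c₀ by linarith) hδ (hc₀.trans ht₀)]
  linarith

lemma normSq_mul_sub_self_le {w x : ℂ} {ε : ℝ} (hw : 0 < w.re) (hε : 0 ≤ ε)
    (hx : 1 - ε ≤ Complex.normSq x) (hx' : Complex.normSq x ≤ 1)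
    (hwx : 1 - ε ≤ Complex.normSq (w * x)) (hwx' : Complex.normSq (w * x) ≤ 1) :
    Complex.normSq (w * x - x) ≤ 4 * ε + 2 * (w.im / w.re) ^ 2 := by
  set a := w.re
  set b := w.im
  set P := Complex.normSq x
  set d := (b / a) ^ 2
  have hY : Complex.normSq (w * x) = (a ^ 2 + b ^ 2) * P := by
    rw [Complex.normSq_mul, Complex.normSq_apply]; ring
  have hL : Complex.normSq (w * x - x) = ((a - 1) ^ 2 + b ^ 2) * P := by
    rw [← sub_one_mul, Complex.normSq_mul, Complex.normSq_apply]
    simp only [Complex.sub_re, Complex.one_re, Complex.sub_im, Complex.one_im, sub_zero]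
    ring
  have hb : b ^ 2 = d * a ^ 2 := by simp only [d]; field_simp
  have hd : 0 ≤ d := sq_nonneg _
  have hP : 0 ≤ P := Complex.normSq_nonneg x
  have hbP : b ^ 2 * P ≤ d := by
    calc b ^ 2 * P = d * (a ^ 2 * P) := by rw [hb]; ring
      _ ≤ d * 1 := by gcongr; nlinarith [sq_nonneg b]
      _ = d := mul_one d
  have hYP : 1 - 2 * ε ≤ (a ^ 2 + b ^ 2) * P * P := by
    rw [← hY]; nlinarith [mul_nonneg (Complex.normSq_nonneg (w * x)) hP]
  -- `1 - aP ≤ 1 - (aP)²` once `aP ≤ 1`, and `(aP)² = (a² + b²)P² - b²P²` is close to `1`.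
  have haP : 1 - a * P ≤ 2 * ε + d := by
    rcases le_or_gt 1 (a * P) with h1 | h1
    · linarith
    · nlinarith [mul_nonneg hw.le hP, mul_le_mul_of_nonneg_right hbP hP]
  rw [hL]
  nlinarith

lemma sq_div_le_of_rayleigh_shifts {c s α β R : ℝ} (hs : s ≠ 0) (hα : 0 ≤ α - c)
    (hα' : α - c ≤ R) (hβ : 0 ≤ β - c) (hβ' : β - c ≤ R) :
    (s * (β - α) / ((c - β) * (c - α) + s ^ 2)) ^ 2 ≤ R ^ 2 / s ^ 2 := by
  have hs2 : 0 < s ^ 2 := by positivity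
  have hp : s ^ 2 ≤ (c - β) * (c - α) + s ^ 2 := by nlinarith [mul_nonneg hβ hα]
  have hβα : (β - α) ^ 2 ≤ R ^ 2 := by nlinarith
  rw [div_pow, div_le_div_iff₀ (pow_pos (hs2.trans_le hp) 2) hs2, mul_pow]
  calc s ^ 2 * (β - α) ^ 2 * s ^ 2 ≤ R ^ 2 * (s ^ 2) ^ 2 := by
        nlinarith [mul_le_mul_of_nonneg_left hβα (mul_pos hs2 hs2).le]
    _ ≤ R ^ 2 * ((c - β) * (c - α) + s ^ 2) ^ 2 := by gcongr

lemma exists_eventually_le_mul_pow {f : ℕ → ℝ} {C q D : ℝ} (hq₀ : 0 ≤ q) (hq₁ : q < 1)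
    (hD : 0 < D) (hf : ∀ k, f k ≤ C * q ^ k) :
    ∃ ρ : ℝ, 0 < ρ ∧ ρ < 1 ∧ ∃ K : ℕ, ∀ k ≥ K, f k ≤ D * ρ ^ k := by
  obtain ⟨ρ, hqρ, hρ₁⟩ := exists_between hq₁
  have hρ₀ : 0 < ρ := hq₀.trans_lt hqρ
  obtain ⟨K, hK⟩ := eventually_atTop.1
    (((isLittleO_pow_pow_of_lt_left hq₀ hqρ).const_mul_left C).bound hD)
  refine ⟨ρ, hρ₀, hρ₁, K, fun k hk => (hf k).trans ?_⟩
  have hk' := hK k hk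
  rw [Real.norm_eq_abs, Real.norm_of_nonneg (pow_nonneg hρ₀.le k)] at hk'
  exact (le_abs_self _).trans hk'

section Rayleigh

variable {ι : Type*} [Fintype ι]

lemma mulv_apply (A : Matrix ι ι ℝ) (v : EuclideanSpace ℝ ι) (i : ι) :
    mulv A v i = ∑ j, A i j * v j := by
  simp [mulv, Matrix.mulVec, dotProduct]

lemma inner_mulv_transpose_s18 (A : Matrix ι ι ℝ) (u : EuclideanSpace ℝ ι) :
    inner ℝ u (mulv Aᵀ u) = inner ℝ u (mulv A u) := by
  simp only [PiLp.inner_apply, RCLike.inner_apply, conj_trivial, mulv_apply,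
    Matrix.transpose_apply, Finset.sum_mul]
  rw [Finset.sum_comm]
  exact Finset.sum_congr rfl fun i _ => Finset.sum_congr rfl fun j _ => by ring

def rayleighResidual (B : Matrix ι ι ℝ) (u : EuclideanSpace ℝ ι) : EuclideanSpace ℝ ι :=
  mulv B u - inner ℝ u (mulv B u) • u

def aciHalf (B : Matrix ι ι ℝ) (u : EuclideanSpace ℝ ι) : EuclideanSpace ℝ ι :=
  ‖rayleighResidual B u‖⁻¹ • rayleighResidual B u

def aciStep (B : Matrix ι ι ℝ) (u : EuclideanSpace ℝ ι) : EuclideanSpace ℝ ι :=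
  aciHalf Bᵀ (aciHalf B u)

end Rayleigh

structure BlockGap {m : ℕ} (c s : Fin m → ℝ) (j₀ : Fin m) (δ : ℝ) : Prop where
  sq_add_sq : ∀ j, c j ^ 2 + s j ^ 2 = 1
  ne_zero : s j₀ ≠ 0
  pos : 0 < c j₀
  gap_pos : 0 < δ
  add_le : ∀ j ≠ j₀, c j₀ + δ ≤ c j
  add_le_one : c j₀ + δ ≤ 1

namespace BlockGap

variable {m : ℕ} {c s : Fin m → ℝ} {j₀ : Fin m} {δ : ℝ}

lemma neg (h : BlockGap c s j₀ δ) : BlockGap c (-s) j₀ δ where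
  sq_add_sq j := by simpa using h.sq_add_sq j
  ne_zero := by simpa using h.ne_zero
  pos := h.pos
  gap_pos := h.gap_pos
  add_le := h.add_le
  add_le_one := h.add_le_one

lemma min_le (h : BlockGap c s j₀ δ) (j : Fin m) : c j₀ ≤ c j := by
  rcases eq_or_ne j j₀ with rfl | hj
  · exact le_rfl
  · linarith [h.add_le j hj, h.gap_pos]

lemma le_one (h : BlockGap c s j₀ δ) (j : Fin m) : c j ≤ 1 := by
  nlinarith [h.sq_add_sq j, sq_nonneg (s j)]

lemma one_sub_mul_nonneg (h : BlockGap c s j₀ δ) : 0 ≤ 1 - c j₀ * δ := by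
  nlinarith [h.pos, h.gap_pos, h.add_le_one]

lemma one_sub_mul_lt_one (h : BlockGap c s j₀ δ) : 1 - c j₀ * δ < 1 := by
  nlinarith [mul_pos h.pos h.gap_pos]

end BlockGap

lemma exists_blockGap {m : ℕ} {c s : Fin m → ℝ} {j₀ : Fin m} (hcs : ∀ j, c j ^ 2 + s j ^ 2 = 1)
    (hs : s j₀ ≠ 0) (hc₀ : 0 < c j₀) (hc₁ : c j₀ < 1) (hlt : ∀ j ≠ j₀, c j₀ < c j) :
    ∃ δ, BlockGap c s j₀ δ := by
  have hev : ∀ᶠ δ in 𝓝[>] (0 : ℝ), (∀ j ≠ j₀, c j₀ + δ ≤ c j) ∧ c j₀ + δ ≤ 1 := by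
    refine nhdsWithin_le_nhds ((eventually_all.2 fun j => ?_).and ?_)
    · rcases eq_or_ne j j₀ with rfl | hj
      · exact .of_forall fun _ hj => absurd rfl hj
      · exact (eventually_lt_nhds (sub_pos.2 (hlt j hj))).mono fun δ hδ _ => by linarith
    · exact (eventually_lt_nhds (sub_pos.2 hc₁)).mono fun δ hδ => by linarith
  obtain ⟨δ, ⟨hδj, hδ1⟩, hδ⟩ := (hev.and self_mem_nhdsWithin).exists
  exact ⟨δ, ⟨hcs, hs, hc₀, hδ, hδj, hδ1⟩⟩

namespace BlockRot

variable {m e : ℕ} {c s : Fin m → ℝ} {j₀ : Fin m} {δ : ℝ}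

local notation "V" => EuclideanSpace ℝ ((Fin m × Fin 2) ⊕ Fin e)

def block (u : V) (j : Fin m) : ℂ := ⟨u (.inl (j, 0)), u (.inl (j, 1))⟩

def fixSq (u : V) : ℝ := ∑ i, u (.inr i) ^ 2

def offSq (j₀ : Fin m) (u : V) : ℝ :=
  ∑ j ∈ Finset.univ.erase j₀, Complex.normSq (block u j) + fixSq u

def offRatio (j₀ : Fin m) (u : V) : ℝ := offSq j₀ u / Complex.normSq (block u j₀)

@[simp] lemma block_sub (u u' : V) (j : Fin m) : block (u - u') j = block u j - block u' j := rfl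

@[simp] lemma block_smul (r : ℝ) (u : V) (j : Fin m) : block (r • u) j = r * block u j := by
  apply Complex.ext <;> simp [block]

lemma fixSq_nonneg (u : V) : 0 ≤ fixSq u := by unfold fixSq; positivity

lemma offSq_nonneg (j₀ : Fin m) (u : V) : 0 ≤ offSq j₀ u :=
  add_nonneg (Finset.sum_nonneg fun _ _ => Complex.normSq_nonneg _) (fixSq_nonneg u)

lemma offRatio_nonneg (j₀ : Fin m) (u : V) : 0 ≤ offRatio j₀ u :=
  div_nonneg (offSq_nonneg j₀ u) (Complex.normSq_nonneg _)

lemma fixSq_smul (r : ℝ) (u : V) : fixSq (r • u) = r ^ 2 * fixSq u := by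
  simp only [fixSq, Finset.mul_sum, PiLp.smul_apply, smul_eq_mul, mul_pow]

lemma offSq_smul (j₀ : Fin m) (r : ℝ) (u : V) : offSq j₀ (r • u) = r ^ 2 * offSq j₀ u := by
  simp only [offSq, fixSq_smul, block_smul, Complex.normSq_mul, Complex.normSq_ofReal, mul_add,
    Finset.mul_sum, sq]

lemma offRatio_smul (j₀ : Fin m) {r : ℝ} (hr : r ≠ 0) (u : V) :
    offRatio j₀ (r • u) = offRatio j₀ u := by
  simp only [offRatio, offSq_smul, block_smul, Complex.normSq_mul, Complex.normSq_ofReal]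
  rw [← sq, mul_div_mul_left _ _ (pow_ne_zero 2 hr)]

lemma offSq_sub_le (j₀ : Fin m) (u u' : V) :
    offSq j₀ (u - u') ≤ 2 * offSq j₀ u + 2 * offSq j₀ u' := by
  have hsq (a b : ℝ) : (a - b) ^ 2 ≤ 2 * a ^ 2 + 2 * b ^ 2 := by nlinarith [sq_nonneg (a + b)]
  simp only [offSq, fixSq, mul_add, Finset.mul_sum]
  rw [add_add_add_comm, ← Finset.sum_add_distrib, ← Finset.sum_add_distrib]
  refine add_le_add (Finset.sum_le_sum fun j _ => ?_) (Finset.sum_le_sum fun i _ => hsq _ _)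
  simp only [block_sub, Complex.normSq_apply, Complex.sub_re, Complex.sub_im]
  nlinarith [hsq (block u j).re (block u' j).re, hsq (block u j).im (block u' j).im]

lemma sum_sum_type {M : Type*} [AddCommMonoid M] (f : (Fin m × Fin 2) ⊕ Fin e → M) :
    ∑ i, f i = ∑ j, (f (.inl (j, 0)) + f (.inl (j, 1))) + ∑ i, f (.inr i) := by
  simp [Fintype.sum_sum_type, Fintype.sum_prod_type, Fin.sum_univ_two]

lemma norm_sq_eq (u : V) : ‖u‖ ^ 2 = ∑ j, Complex.normSq (block u j) + fixSq u := by
  rw [EuclideanSpace.norm_sq_eq, sum_sum_type]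
  simp [block, fixSq, Complex.normSq_apply, sq]

lemma norm_sq_eq_add_offSq (j₀ : Fin m) (u : V) :
    ‖u‖ ^ 2 = Complex.normSq (block u j₀) + offSq j₀ u := by
  rw [norm_sq_eq, offSq, ← Finset.add_sum_erase _ _ (Finset.mem_univ j₀), add_assoc]

lemma normSq_block_add_offSq {u : V} (hu : ‖u‖ = 1) :
    Complex.normSq (block u j₀) + offSq j₀ u = 1 := by
  rw [← norm_sq_eq_add_offSq, hu, one_pow]

lemma offSq_le_one {u : V} (hu : ‖u‖ = 1) : offSq j₀ u ≤ 1 := by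
  linarith [normSq_block_add_offSq (j₀ := j₀) hu, Complex.normSq_nonneg (block u j₀)]

lemma offSq_le_offRatio {u : V} (hu : ‖u‖ = 1) (hb : block u j₀ ≠ 0) :
    offSq j₀ u ≤ offRatio j₀ u :=
  le_div_self (offSq_nonneg j₀ u) (Complex.normSq_pos.2 hb)
    (by linarith [normSq_block_add_offSq (j₀ := j₀) hu, offSq_nonneg j₀ u])

variable (c s) in
lemma blockRot_transpose : (blockRot m e c s)ᵀ = blockRot m e c (-s) := by
  ext (⟨a, x⟩ | i) (⟨b, y⟩ | i') <;> simp only [Matrix.transpose_apply, blockRot]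
  rcases eq_or_ne a b with rfl | hab
  · fin_cases x <;> fin_cases y <;> simp
  · simp [hab, Ne.symm hab]
  · simp [eq_comm]

lemma block_mulv_blockRot (u : V) (j : Fin m) :
    block (mulv (blockRot m e c s) u) j = ⟨c j, -s j⟩ * block u j := by
  apply Complex.ext <;>
  · simp only [block, mulv_apply, sum_sum_type, Complex.mul_re, Complex.mul_im]
    rw [Finset.sum_eq_single j (fun b _ hb => by simp [blockRot, Ne.symm hb]) (by simp)]
    simp [blockRot, add_comm]

lemma mulv_blockRot_inr (u : V) (i : Fin e) :
    mulv (blockRot m e c s) u (.inr i) = u (.inr i) := by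
  rw [mulv_apply, sum_sum_type,
    Finset.sum_eq_single i (fun b _ hb => by simp [blockRot, Ne.symm hb]) (by simp)]
  simp [blockRot]

lemma inner_mulv_blockRot (u : V) :
    inner ℝ u (mulv (blockRot m e c s) u) =
      ∑ j, c j * Complex.normSq (block u j) + fixSq u := by
  rw [PiLp.inner_apply, sum_sum_type]
  congr 1
  · refine Finset.sum_congr rfl fun j _ => ?_
    have h := congrArg Complex.re (block_mulv_blockRot (c := c) (s := s) u j)
    have h' := congrArg Complex.im (block_mulv_blockRot (c := c) (s := s) u j)
    simp only [block, Complex.mul_re, Complex.mul_im] at h h'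
    simp only [RCLike.inner_apply, conj_trivial, h, h', Complex.normSq_apply, block]
    ring
  · simp [fixSq, mulv_blockRot_inr, sq]

lemma rayleigh_sub_eq {u : V} (hu : ‖u‖ = 1) :
    inner ℝ u (mulv (blockRot m e c s) u) - c j₀ =
      ∑ j ∈ Finset.univ.erase j₀, (c j - c j₀) * Complex.normSq (block u j) +
        (1 - c j₀) * fixSq u := by
  calc inner ℝ u (mulv (blockRot m e c s) u) - c j₀
      = ∑ j, c j * Complex.normSq (block u j) + fixSq u
          - c j₀ * (∑ j, Complex.normSq (block u j) + fixSq u) := by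
        rw [inner_mulv_blockRot, ← norm_sq_eq, hu]; ring
    _ = ∑ j, (c j - c j₀) * Complex.normSq (block u j) + (1 - c j₀) * fixSq u := by
        simp only [sub_mul, Finset.sum_sub_distrib, ← Finset.mul_sum]; ring
    _ = _ := by
        rw [← Finset.add_sum_erase _ _ (Finset.mem_univ j₀), sub_self, zero_mul, zero_add]

lemma rayleigh_sub_mem_Icc (h : BlockGap c s j₀ δ) {u : V} (hu : ‖u‖ = 1) :
    inner ℝ u (mulv (blockRot m e c s) u) - c j₀ ∈ Set.Icc 0 ((1 - c j₀) * offSq j₀ u) := by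
  rw [rayleigh_sub_eq hu, offSq, mul_add, Finset.mul_sum]
  have hc₀ : 0 ≤ 1 - c j₀ := by linarith [h.le_one j₀]
  constructor
  · exact add_nonneg (Finset.sum_nonneg fun j _ => mul_nonneg (sub_nonneg.2 (h.min_le j))
      (Complex.normSq_nonneg _)) (mul_nonneg hc₀ (fixSq_nonneg u))
  · gcongr with j
    · exact Complex.normSq_nonneg _
    · linarith [h.le_one j]

lemma block_rayleighResidual_blockRot (u : V) (j : Fin m) :
    block (rayleighResidual (blockRot m e c s) u) j =
      ⟨c j - inner ℝ u (mulv (blockRot m e c s) u), -s j⟩ * block u j := by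
  rw [rayleighResidual, block_sub, block_smul, block_mulv_blockRot, ← sub_mul]
  congr 1
  apply Complex.ext <;> simp

lemma fixSq_rayleighResidual_blockRot (u : V) :
    fixSq (rayleighResidual (blockRot m e c s) u) =
      (1 - inner ℝ u (mulv (blockRot m e c s) u)) ^ 2 * fixSq u := by
  simp only [fixSq, rayleighResidual, Finset.mul_sum, PiLp.sub_apply, PiLp.smul_apply,
    smul_eq_mul, mulv_blockRot_inr]
  exact Finset.sum_congr rfl fun i _ => by ring

lemma offSq_rayleighResidual_le (h : BlockGap c s j₀ δ) {u : V} (hu : ‖u‖ = 1) :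
    offSq j₀ (rayleighResidual (blockRot m e c s) u) ≤
      (1 - c j₀ * δ) * ((c j₀ - inner ℝ u (mulv (blockRot m e c s) u)) ^ 2 + s j₀ ^ 2) *
        offSq j₀ u := by
  obtain ⟨ht₀, ht₁⟩ := rayleigh_sub_mem_Icc h hu
  have ht₁' : inner ℝ u (mulv (blockRot m e c s) u) ≤ 1 := by
    nlinarith [offSq_le_one (j₀ := j₀) hu, h.le_one j₀]
  have key {c' s' : ℝ} (hcs' : c' ^ 2 + s' ^ 2 = 1) (hc' : c j₀ + δ ≤ c') :=
    sub_sq_add_sq_le_of_gap (t := inner ℝ u (mulv (blockRot m e c s) u)) (h.sq_add_sq j₀) hcs'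
      h.pos.le h.gap_pos.le hc' (by linarith) ht₁'
  rw [offSq, offSq, fixSq_rayleighResidual_blockRot, mul_add, Finset.mul_sum]
  refine add_le_add (Finset.sum_le_sum fun j hj => ?_)
    (mul_le_mul_of_nonneg_right ?_ (fixSq_nonneg u))
  · rw [block_rayleighResidual_blockRot, Complex.normSq_mul, Complex.normSq_mk, ← sq, ← sq]
    exact mul_le_mul_of_nonneg_right
      (key (by simpa using h.sq_add_sq j) (h.add_le j (Finset.ne_of_mem_erase hj)))
      (Complex.normSq_nonneg _)
  · simpa using key (c' := 1) (s' := 0) (by norm_num) h.add_le_one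

lemma block_aciHalf_blockRot (u : V) (j : Fin m) :
    block (aciHalf (blockRot m e c s) u) j =
      (‖rayleighResidual (blockRot m e c s) u‖⁻¹ : ℝ) *
        (⟨c j - inner ℝ u (mulv (blockRot m e c s) u), -s j⟩ * block u j) := by
  rw [aciHalf, block_smul, block_rayleighResidual_blockRot]

theorem aciHalf_blockRot_contract (h : BlockGap c s j₀ δ) {u : V} (hu : ‖u‖ = 1)
    (hb : block u j₀ ≠ 0) :
    ‖aciHalf (blockRot m e c s) u‖ = 1 ∧ block (aciHalf (blockRot m e c s) u) j₀ ≠ 0 ∧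
      offRatio j₀ (aciHalf (blockRot m e c s) u) ≤ (1 - c j₀ * δ) * offRatio j₀ u := by
  set r := rayleighResidual (blockRot m e c s) u
  set t := inner ℝ u (mulv (blockRot m e c s) u)
  have hz : Complex.normSq ⟨c j₀ - t, -s j₀⟩ = (c j₀ - t) ^ 2 + s j₀ ^ 2 := by
    rw [Complex.normSq_mk]; ring
  have hz0 : (c j₀ - t) ^ 2 + s j₀ ^ 2 ≠ 0 := by
    have := h.ne_zero
    positivity
  have hrb : block r j₀ ≠ 0 := by
    rw [block_rayleighResidual_blockRot, ← Complex.normSq_pos, Complex.normSq_mul, hz]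
    exact mul_pos (by positivity) (Complex.normSq_pos.2 hb)
  have hr : r ≠ 0 := fun h0 => hrb (by rw [h0]; rfl)
  have hr' : ‖r‖⁻¹ ≠ 0 := inv_ne_zero (norm_ne_zero_iff.2 hr)
  refine ⟨norm_smul_inv_norm (𝕜 := ℝ) hr, ?_, ?_⟩
  · rw [aciHalf, block_smul]
    exact mul_ne_zero (by exact_mod_cast hr') hrb
  · rw [aciHalf, offRatio_smul _ hr', offRatio, offRatio, block_rayleighResidual_blockRot,
      Complex.normSq_mul, hz]
    calc offSq j₀ r / (((c j₀ - t) ^ 2 + s j₀ ^ 2) * Complex.normSq (block u j₀))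
        ≤ (1 - c j₀ * δ) * ((c j₀ - t) ^ 2 + s j₀ ^ 2) * offSq j₀ u /
            (((c j₀ - t) ^ 2 + s j₀ ^ 2) * Complex.normSq (block u j₀)) :=
          div_le_div_of_nonneg_right (offSq_rayleighResidual_le h hu)
            (mul_nonneg (by positivity) (Complex.normSq_nonneg _))
      _ = (1 - c j₀ * δ) * (offSq j₀ u / Complex.normSq (block u j₀)) := by
          field_simp

theorem aciStep_blockRot_contract (h : BlockGap c s j₀ δ) {u : V} (hu : ‖u‖ = 1)
    (hb : block u j₀ ≠ 0) :
    ‖aciStep (blockRot m e c s) u‖ = 1 ∧ block (aciStep (blockRot m e c s) u) j₀ ≠ 0 ∧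
      offRatio j₀ (aciStep (blockRot m e c s) u) ≤ (1 - c j₀ * δ) ^ 2 * offRatio j₀ u := by
  obtain ⟨hw, hwb, hwr⟩ := aciHalf_blockRot_contract h hu hb
  obtain ⟨hv, hvb, hvr⟩ := aciHalf_blockRot_contract h.neg hw hwb
  rw [aciStep, blockRot_transpose]
  refine ⟨hv, hvb, hvr.trans ?_⟩
  rw [sq, mul_assoc]
  exact mul_le_mul_of_nonneg_left hwr h.one_sub_mul_nonneg

theorem aciStep_orbit_contract (h : BlockGap c s j₀ δ) {v : ℕ → V}
    (hv : ∀ k, v (k + 1) = aciStep (blockRot m e c s) (v k)) (hv0 : ‖v 0‖ = 1)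
    (hb : block (v 0) j₀ ≠ 0) (k : ℕ) :
    ‖v k‖ = 1 ∧ block (v k) j₀ ≠ 0 ∧
      offRatio j₀ (v k) ≤ (1 - c j₀ * δ) ^ (2 * k) * offRatio j₀ (v 0) := by
  induction k with
  | zero => simp [hv0, hb]
  | succ k ih =>
    obtain ⟨hk, hkb, hkr⟩ := ih
    obtain ⟨hk', hkb', hkr'⟩ := hv k ▸ aciStep_blockRot_contract h hk hkb
    refine ⟨hk', hkb', hkr'.trans ?_⟩
    rw [mul_add, mul_one, pow_add, mul_comm ((1 - c j₀ * δ) ^ (2 * k)), mul_assoc]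
    exact mul_le_mul_of_nonneg_left hkr (pow_nonneg h.one_sub_mul_nonneg 2)

theorem norm_aciStep_sub_sq_le (h : BlockGap c s j₀ δ) {u : V} (hu : ‖u‖ = 1)
    (hb : block u j₀ ≠ 0) :
    ‖aciStep (blockRot m e c s) u - u‖ ^ 2 ≤
      8 * offRatio j₀ u + 2 * (offRatio j₀ u ^ 2 / s j₀ ^ 2) := by
  obtain ⟨hw, hwb, hwR⟩ := aciHalf_blockRot_contract h hu hb
  obtain ⟨hu', hu'b, hu'R⟩ := aciStep_blockRot_contract h hu hb
  obtain ⟨hα0, hα1⟩ := rayleigh_sub_mem_Icc h hu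
  obtain ⟨hβ0, hβ1⟩ := rayleigh_sub_mem_Icc h.neg hw
  set R := offRatio j₀ u
  set w := aciHalf (blockRot m e c s) u
  set u' := aciStep (blockRot m e c s) u
  set α := inner ℝ u (mulv (blockRot m e c s) u)
  set β := inner ℝ w (mulv (blockRot m e c (-s)) w)
  have hR : 0 ≤ R := offRatio_nonneg j₀ u
  have huR : offSq j₀ u ≤ R := offSq_le_offRatio hu hb
  have hwR' : offSq j₀ w ≤ R := (offSq_le_offRatio hw hwb).trans
    (hwR.trans (mul_le_of_le_one_left hR h.one_sub_mul_lt_one.le))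
  have hu'R' : offSq j₀ u' ≤ R := (offSq_le_offRatio hu' hu'b).trans (hu'R.trans
    (mul_le_of_le_one_left hR (pow_le_one₀ h.one_sub_mul_nonneg h.one_sub_mul_lt_one.le)))
  have hαR : α - c j₀ ≤ R := by nlinarith [offSq_nonneg j₀ u, h.pos]
  have hβR : β - c j₀ ≤ R := by nlinarith [offSq_nonneg j₀ w, h.pos]
  obtain ⟨l, hl, hblock⟩ : ∃ l : ℝ, 0 ≤ l ∧ block u' j₀ =
      (l * ((⟨c j₀ - β, s j₀⟩ : ℂ) * ⟨c j₀ - α, -s j₀⟩)) * block u j₀ :=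
    ⟨‖rayleighResidual (blockRot m e c (-s)) w‖⁻¹ * ‖rayleighResidual (blockRot m e c s) u‖⁻¹,
      by positivity, by
      rw [show u' = aciHalf (blockRot m e c (-s)) w by rw [← blockRot_transpose]; rfl,
        block_aciHalf_blockRot, block_aciHalf_blockRot]
      push_cast; simp only [Pi.neg_apply, neg_neg]; ring⟩
  set z : ℂ := l * ((⟨c j₀ - β, s j₀⟩ : ℂ) * ⟨c j₀ - α, -s j₀⟩)
  have hl0 : l ≠ 0 := by rintro rfl; exact hu'b (by simp [hblock, z])
  have hre : z.re = l * ((c j₀ - β) * (c j₀ - α) + s j₀ ^ 2) := by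
    simp only [z, Complex.mul_re, Complex.mul_im, Complex.ofReal_re, Complex.ofReal_im]; ring
  have him : z.im = l * (s j₀ * (β - α)) := by
    simp only [z, Complex.mul_re, Complex.mul_im, Complex.ofReal_re, Complex.ofReal_im]; ring
  have hzre : 0 < z.re := by
    rw [hre]
    exact mul_pos (lt_of_le_of_ne hl (Ne.symm hl0))
      (by nlinarith [sq_pos_of_ne_zero h.ne_zero])
  have hratio : (z.im / z.re) ^ 2 ≤ R ^ 2 / s j₀ ^ 2 := by
    rw [hre, him, mul_div_mul_left _ _ hl0]
    exact sq_div_le_of_rayleigh_shifts h.ne_zero hα0 hαR hβ0 hβR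
  have hu1 := normSq_block_add_offSq (j₀ := j₀) hu
  have hu'1 := normSq_block_add_offSq (j₀ := j₀) hu'
  rw [hblock] at hu'1
  have hblk : Complex.normSq (block u' j₀ - block u j₀) ≤ 4 * R + 2 * (R ^ 2 / s j₀ ^ 2) := by
    rw [hblock]
    refine (normSq_mul_sub_self_le hzre hR ?_ ?_ ?_ ?_).trans (by gcongr)
    all_goals linarith [offSq_nonneg j₀ u, offSq_nonneg j₀ u']
  calc ‖u' - u‖ ^ 2 = Complex.normSq (block (u' - u) j₀) + offSq j₀ (u' - u) :=
        norm_sq_eq_add_offSq j₀ _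
    _ ≤ 4 * R + 2 * (R ^ 2 / s j₀ ^ 2) + (2 * offSq j₀ u' + 2 * offSq j₀ u) :=
        add_le_add (by rwa [block_sub]) (offSq_sub_le j₀ u' u)
    _ ≤ 8 * R + 2 * (R ^ 2 / s j₀ ^ 2) := by linarith

theorem norm_aciStep_orbit_sub_le (h : BlockGap c s j₀ δ) {v : ℕ → V}
    (hv : ∀ k, v (k + 1) = aciStep (blockRot m e c s) (v k)) (hv0 : ‖v 0‖ = 1)
    (hb : block (v 0) j₀ ≠ 0) (k : ℕ) :
    ‖v (k + 1) - v k‖ ≤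
      √(8 * offRatio j₀ (v 0) + 2 * (offRatio j₀ (v 0) ^ 2 / s j₀ ^ 2)) *
        (1 - c j₀ * δ) ^ k := by
  obtain ⟨hk, hkb, hkr⟩ := aciStep_orbit_contract h hv hv0 hb k
  set r₀ := offRatio j₀ (v 0)
  set ε := ((1 - c j₀ * δ) ^ k) ^ 2
  have hε0 : 0 ≤ ε := sq_nonneg _
  have hε1 : ε ≤ 1 := pow_le_one₀ (pow_nonneg h.one_sub_mul_nonneg k)
    (pow_le_one₀ h.one_sub_mul_nonneg h.one_sub_mul_lt_one.le)
  have hr₀ : 0 ≤ r₀ := offRatio_nonneg j₀ (v 0)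
  rw [pow_mul'] at hkr
  have hkr2 : offRatio j₀ (v k) ^ 2 ≤ r₀ ^ 2 * ε :=
    calc offRatio j₀ (v k) ^ 2 ≤ (ε * r₀) ^ 2 :=
          pow_le_pow_left₀ (offRatio_nonneg j₀ (v k)) hkr 2
      _ = r₀ ^ 2 * ε * ε := by ring
      _ ≤ r₀ ^ 2 * ε := mul_le_of_le_one_right (by positivity) hε1
  have hsq : ‖v (k + 1) - v k‖ ^ 2 ≤ (8 * r₀ + 2 * (r₀ ^ 2 / s j₀ ^ 2)) * ε := by
    rw [hv k]
    refine (norm_aciStep_sub_sq_le h hk hkb).trans ?_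
    have := div_le_div_of_nonneg_right hkr2 (sq_nonneg (s j₀))
    rw [mul_div_right_comm] at this
    nlinarith
  calc ‖v (k + 1) - v k‖ = √(‖v (k + 1) - v k‖ ^ 2) := (Real.sqrt_sq (norm_nonneg _)).symm
    _ ≤ √((8 * r₀ + 2 * (r₀ ^ 2 / s j₀ ^ 2)) * ε) := Real.sqrt_le_sqrt hsq
    _ = _ := by rw [Real.sqrt_mul' _ hε0, Real.sqrt_sq (pow_nonneg h.one_sub_mul_nonneg k)]

end BlockRot

theorem aci1_orthogonal_converges_general {m e : ℕ} (hm : 0 < m)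
    (c s : Fin m → ℝ) (hcs : ∀ j, c j ^ 2 + s j ^ 2 = 1) (hsne : ∀ j, s j ≠ 0)
    (hc0 : ∀ j, 0 < c j) (hc1 : ∀ j, c j < 1) (hmono : StrictMono c)
    (A : Matrix ((Fin m × Fin 2) ⊕ Fin e) ((Fin m × Fin 2) ⊕ Fin e) ℝ)
    (hA : A = blockRot m e c s)
    (v wt w vt : ℕ → EuclideanSpace ℝ ((Fin m × Fin 2) ⊕ Fin e)) (α β : ℕ → ℝ)
    (hv0 : ‖v 0‖ = 1)
    (hblock1 : ∃ i : Fin 2,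
      (WithLp.equiv 2 (((Fin m × Fin 2) ⊕ Fin e) → ℝ)) (v 0) (Sum.inl (⟨0, hm⟩, i)) ≠ 0)
    (hα : ∀ k, α k = (inner ℝ (v k) (mulv A (v k)) : ℝ))
    (hwt : ∀ k, wt k = mulv A (v k) - α k • v k)
    (hw : ∀ k, w k = ‖wt k‖⁻¹ • wt k)
    (hβ : ∀ k, β k = (inner ℝ (w k) (mulv A (w k)) : ℝ))
    (hvt : ∀ k, vt (k + 1) = mulv Aᵀ (w k) - β k • w k)
    (hv : ∀ k, v (k + 1) = ‖vt (k + 1)‖⁻¹ • vt (k + 1)) :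
    (∃ vstar : EuclideanSpace ℝ ((Fin m × Fin 2) ⊕ Fin e), Tendsto v atTop (𝓝 vstar)) ∧
    (∃ ρ : ℝ, 0 < ρ ∧ ρ < 1 ∧ ∃ K : ℕ, ∀ k ≥ K, ‖v (k + 1) - v k‖ ≤ Real.sqrt 3 * ρ ^ k) ∧
    Summable (fun k => ‖v (k + 1) - v k‖) := by
  subst hA
  set j₀ : Fin m := ⟨0, hm⟩
  obtain ⟨δ, hgap⟩ := exists_blockGap hcs (hsne j₀) (hc0 j₀) (hc1 j₀)
    fun j hj => hmono (lt_of_le_of_ne (Nat.zero_le _) (Ne.symm hj))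
  have hw' (k : ℕ) : w k = aciHalf (blockRot m e c s) (v k) := by rw [hw, hwt, hα]; rfl
  have hstep (k : ℕ) : v (k + 1) = aciStep (blockRot m e c s) (v k) := by
    rw [hv, hvt, hβ, ← inner_mulv_transpose_s18, hw']; rfl
  have hb : BlockRot.block (v 0) j₀ ≠ 0 := by
    obtain ⟨i, hi⟩ := hblock1
    contrapose! hi
    fin_cases i
    · simpa [BlockRot.block] using congrArg Complex.re hi
    · simpa [BlockRot.block] using congrArg Complex.im hi
  have hdiff := BlockRot.norm_aciStep_orbit_sub_le hgap hstep hv0 hb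
  have hq₀ := hgap.one_sub_mul_nonneg
  have hq₁ := hgap.one_sub_mul_lt_one
  exact ⟨cauchySeq_tendsto_of_complete
      (cauchySeq_of_le_geometric _ _ hq₁ fun k => (dist_eq_norm' _ _).trans_le (hdiff k)),
    exists_eventually_le_mul_pow hq₀ hq₁ (by positivity) hdiff,
    Summable.of_nonneg_of_le (fun k => norm_nonneg _) hdiff
      ((summable_geometric_of_lt_one hq₀ hq₁).mul_left _)⟩

theorem aci1_orthogonal_converges {m e : ℕ} (hm : 0 < m) (he : e ≤ 1)
    (c s : Fin m → ℝ) (hcs : ∀ j, c j ^ 2 + s j ^ 2 = 1) (hsne : ∀ j, s j ≠ 0)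
    (hc0 : ∀ j, 0 < c j) (hc1 : ∀ j, c j < 1) (hmono : StrictMono c)
    (A : Matrix ((Fin m × Fin 2) ⊕ Fin e) ((Fin m × Fin 2) ⊕ Fin e) ℝ)
    (hA : A = blockRot m e c s)
    (v wt w vt : ℕ → EuclideanSpace ℝ ((Fin m × Fin 2) ⊕ Fin e)) (α β : ℕ → ℝ)
    (hv0 : ‖v 0‖ = 1) (hg : 2 ≤ vgrade A (v 0))
    (hblock1 : ∃ i : Fin 2,
      (WithLp.equiv 2 (((Fin m × Fin 2) ⊕ Fin e) → ℝ)) (v 0) (Sum.inl (⟨0, hm⟩, i)) ≠ 0)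
    (hα : ∀ k, α k = (inner ℝ (v k) (mulv A (v k)) : ℝ))
    (hwt : ∀ k, wt k = mulv A (v k) - α k • v k)
    (hw : ∀ k, w k = ‖wt k‖⁻¹ • wt k)
    (hβ : ∀ k, β k = (inner ℝ (w k) (mulv A (w k)) : ℝ))
    (hvt : ∀ k, vt (k + 1) = mulv Aᵀ (w k) - β k • w k)
    (hv : ∀ k, v (k + 1) = ‖vt (k + 1)‖⁻¹ • vt (k + 1)) :
    (∃ vstar : EuclideanSpace ℝ ((Fin m × Fin 2) ⊕ Fin e), Tendsto v atTop (𝓝 vstar)) ∧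
    (∃ ρ : ℝ, 0 < ρ ∧ ρ < 1 ∧ ∃ K : ℕ, ∀ k ≥ K, ‖v (k + 1) - v k‖ ≤ Real.sqrt 3 * ρ ^ k) ∧
    Summable (fun k => ‖v (k + 1) - v k‖) :=
  aci1_orthogonal_converges_general hm c s hcs hsne hc0 hc1 hmono A hA v wt w vt α β hv0 hblock1 hα
    hwt hw hβ hvt hv
end
end
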